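/- arXiv:2106.05548 — 6 statements merged into one kernel-verified Lean document; each statement's English description precedes it below -/
import Mathlib

section
/- Let R be a commutative ring, n ≥ 2, G an abelian group, and φ : Um_n(R) → G a map satisfying MS1 (φ(vε) = φ(v) for every ε ∈ E_n(R) and v ∈ Um_n(R)) and MS4 (φ(f², a₂,…,aₙ)·φ(g, a₂,…,aₙ) = φ(f²g, a₂,…,aₙ) whenever all rows involved are unimodular). If φ satisfies MS3 (φ(x, a₂,…,aₙ)·φ(y, a₂,…,aₙ) = φ(xy, a₂,…,aₙ) whenever x + y = 1 and all rows involved are unimodular), then φ satisfies MS5: φ(r, a₂,…,aₙ)·φ(1+q, a₂,…,aₙ) = φ(q, a₂,…,aₙ) whenever r(1+q) ≡ q mod (a₂,…,aₙ) and all rows involved are unimodular. -/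
/-- A row `v` of length `n` over a commutative ring is *unimodular* if there is a row `w`
with `∑ i, v i * w i = 1`. -/
def IsUnimodular {R : Type*} [CommRing R] {n : ℕ} (v : Fin n → R) : Prop :=
  ∃ w : Fin n → R, ∑ i, v i * w i = 1

/-- `ε` lies in the elementary group `E_n(R)`, i.e. the (sub)group of `GL_n(R)` generated by
the elementary matrices `e_{ij}(λ) = I + λ E_{ij}` (`i ≠ j`).  Since the generating set is
closed under inverses, this coincides with the multiplicative closure. -/
def IsElementary {R : Type*} [CommRing R] {n : ℕ} (ε : Matrix (Fin n) (Fin n) R) : Prop :=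
  ε ∈ Submonoid.closure {M : Matrix (Fin n) (Fin n) R |
    ∃ (i j : Fin n) (c : R), i ≠ j ∧ M = Matrix.transvection i j c}

/-- An `m × n` matrix is right invertible (i.e. lies in `Um_{m,n}(R)`) if it has a right
inverse. -/
def RightInvertible {R : Type*} [CommRing R] {m n : ℕ} (A : Matrix (Fin m) (Fin n) R) : Prop :=
  ∃ B : Matrix (Fin n) (Fin m) R, A * B = 1

/-- The stable range condition `sr_k(R)`. -/
def SRCond (R : Type*) [CommRing R] (k : ℕ) : Prop :=
  ∀ a : Fin (k + 1) → R, IsUnimodular a →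
    ∃ c : Fin k → R, IsUnimodular (fun i : Fin k => a i.castSucc + c i * a (Fin.last k))

section MennickeSymbolRelations

variable {R : Type*} [CommRing R] {G : Type*} [CommGroup G] {k : ℕ}

/-- `MS1`: invariance of `φ` under the right action of `E_n(R)` on unimodular rows. -/
def MS1 (φ : (Fin (k + 1) → R) → G) : Prop :=
  ∀ (v : Fin (k + 1) → R) (ε : Matrix (Fin (k + 1)) (Fin (k + 1)) R),
    IsUnimodular v → IsElementary ε → φ (Matrix.vecMul v ε) = φ v

/-- `MS3`: `φ(x,a)·φ(y,a) = φ(xy,a)` whenever `x + y = 1` and all rows involved are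
unimodular. -/
def MS3 (φ : (Fin (k + 1) → R) → G) : Prop :=
  ∀ (x y : R) (a : Fin k → R), x + y = 1 →
    IsUnimodular (Fin.cons x a) → IsUnimodular (Fin.cons y a) →
    IsUnimodular (Fin.cons (x * y) a) →
    φ (Fin.cons x a) * φ (Fin.cons y a) = φ (Fin.cons (x * y) a)

/-- `MS4`: `φ(f²,a)·φ(g,a) = φ(f²g,a)` whenever all rows involved are unimodular. -/
def MS4 (φ : (Fin (k + 1) → R) → G) : Prop :=
  ∀ (f g : R) (a : Fin k → R),
    IsUnimodular (Fin.cons (f ^ 2) a) → IsUnimodular (Fin.cons g a) →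
    IsUnimodular (Fin.cons (f ^ 2 * g) a) →
    φ (Fin.cons (f ^ 2) a) * φ (Fin.cons g a) = φ (Fin.cons (f ^ 2 * g) a)

/-- `MS5`: `φ(r,a)·φ(1+q,a) = φ(q,a)` whenever `r(1+q) ≡ q mod (a₂,…,aₙ)` and all rows
involved are unimodular. -/
def MS5 (φ : (Fin (k + 1) → R) → G) : Prop :=
  ∀ (r q : R) (a : Fin k → R),
    r * (1 + q) - q ∈ Ideal.span (Set.range a) →
    IsUnimodular (Fin.cons r a) → IsUnimodular (Fin.cons (1 + q) a) →
    IsUnimodular (Fin.cons q a) →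
    φ (Fin.cons r a) * φ (Fin.cons (1 + q) a) = φ (Fin.cons q a)

end MennickeSymbolRelations

/-!
Put `s = 1 - r` and work modulo `I = (a₂,…,aₙ)`, where `r(1+q) ≡ q` gives `s(1+q) ≡ 1` and
`r ≡ sq`. Adding multiples of the `aᵢ` to the first entry is an elementary operation, so by
`MS1` the symbol `φ(x, a)` depends only on the unit `x mod I`. Then `MS4` gives
`φ(s²)φ(1+q) = φ(s²(1+q)) = φ(s)`, and `MS3` with `MS4` gives
`φ(s)φ(r) = φ(sr) = φ(s²q) = φ(s²)φ(q)`; cancelling `φ(s²)` yields `MS5`.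
-/

theorem isUnimodular_cons_iff_isUnit_mk {R : Type*} [CommRing R] {k : ℕ} {x : R}
    {a : Fin k → R} :
    IsUnimodular (Fin.cons x a) ↔ IsUnit (Ideal.Quotient.mk (Ideal.span (Set.range a)) x) := by
  set π := Ideal.Quotient.mk (Ideal.span (Set.range a))
  have hπa : ∀ i, π (a i) = 0 := fun i =>
    Ideal.Quotient.eq_zero_iff_mem.2 (Ideal.subset_span ⟨i, rfl⟩)
  constructor
  · rintro ⟨w, hw⟩
    refine IsUnit.of_mul_eq_one (π (w 0)) ?_
    rw [Fin.sum_univ_succ] at hw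
    simpa [hπa] using congrArg π hw
  · rintro ⟨u, hu⟩
    obtain ⟨b, hb⟩ := Ideal.Quotient.mk_surjective (↑u⁻¹ : R ⧸ Ideal.span (Set.range a))
    have hxb : 1 - x * b ∈ Ideal.span (Set.range a) := by
      rw [← Ideal.Quotient.eq, map_one, map_mul, hb, ← hu, Units.mul_inv]
    obtain ⟨c, hc⟩ := (Submodule.mem_span_range_iff_exists_fun R).1 hxb
    refine ⟨Fin.cons b c, ?_⟩
    simp only [Fin.sum_univ_succ, Fin.cons_zero, Fin.cons_succ, smul_eq_mul] at hc ⊢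
    simp only [mul_comm (a _), hc]
    ring

theorem vecMul_cons_transvection_succ_zero {R : Type*} [CommRing R] {k : ℕ}
    (x c : R) (a : Fin k → R) (i : Fin k) :
    Matrix.vecMul (Fin.cons x a) (Matrix.transvection i.succ 0 c) = Fin.cons (x + c * a i) a := by
  funext l
  rw [Matrix.transvection, Matrix.vecMul_add, Matrix.vecMul_one]
  rcases Fin.eq_zero_or_eq_succ l with rfl | ⟨j, rfl⟩
  · simp [Matrix.vecMul, dotProduct, Matrix.single, mul_comm]
  · simp [Matrix.vecMul, dotProduct, Matrix.single, (Fin.succ_ne_zero j).symm]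

namespace MS1

variable {R : Type*} [CommRing R] {G : Type*} {k : ℕ} {φ : (Fin (k + 1) → R) → G}

theorem apply_cons_add_mul (h1 : MS1 φ) {x : R} {a : Fin k → R}
    (hx : IsUnimodular (Fin.cons x a)) (c : R) (i : Fin k) :
    φ (Fin.cons (x + c * a i) a) = φ (Fin.cons x a) := by
  rw [← vecMul_cons_transvection_succ_zero]
  exact h1 _ _ hx (Submonoid.subset_closure ⟨i.succ, 0, c, Fin.succ_ne_zero i, rfl⟩)

theorem apply_cons_eq_of_mk_eq (h1 : MS1 φ) {x y : R} {a : Fin k → R}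
    (hy : IsUnimodular (Fin.cons y a))
    (hxy : Ideal.Quotient.mk (Ideal.span (Set.range a)) x = Ideal.Quotient.mk _ y) :
    φ (Fin.cons x a) = φ (Fin.cons y a) := by
  obtain ⟨t, ht⟩ := (Submodule.mem_span_range_iff_exists_fun R).1 (Ideal.Quotient.eq.1 hxy)
  have partial_sums : ∀ s : Finset (Fin k),
      φ (Fin.cons (y + ∑ i ∈ s, t i * a i) a) = φ (Fin.cons y a) := by
    intro s
    induction s using Finset.induction_on with
    | empty => simp
    | insert i s hi ih =>
      have hys : IsUnimodular (Fin.cons (y + ∑ j ∈ s, t j * a j) a) := by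
        rw [isUnimodular_cons_iff_isUnit_mk] at hy ⊢
        rwa [(Ideal.Quotient.eq (x := y + _) (y := y)).2]
        rw [add_sub_cancel_left]
        exact Ideal.sum_mem _ fun j _ => Ideal.mul_mem_left _ _ (Ideal.subset_span ⟨j, rfl⟩)
      rw [Finset.sum_insert hi, add_left_comm, add_comm (t i * a i), h1.apply_cons_add_mul hys, ih]
  simpa only [← smul_eq_mul, ht, add_sub_cancel] using partial_sums Finset.univ

end MS1

section MennickeSymbolCalculus

variable {R : Type*} [CommRing R] {G : Type*} [CommGroup G] {k : ℕ}
  {φ : (Fin (k + 1) → R) → G} {a : Fin k → R}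

theorem MS4.apply_cons_sq_mul_apply_cons_of_mk_mul_eq_one (h4 : MS4 φ) (h1 : MS1 φ) {s t : R}
    (hst : Ideal.Quotient.mk (Ideal.span (Set.range a)) s *
      Ideal.Quotient.mk (Ideal.span (Set.range a)) t = 1) :
    φ (Fin.cons (s ^ 2) a) * φ (Fin.cons t a) = φ (Fin.cons s a) := by
  set π := Ideal.Quotient.mk (Ideal.span (Set.range a))
  have unimod : ∀ z, IsUnit (π z) → IsUnimodular (Fin.cons z a) :=
    fun z => isUnimodular_cons_iff_isUnit_mk.2
  have hs : IsUnit (π s) := IsUnit.of_mul_eq_one _ hst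
  have ht : IsUnit (π t) := IsUnit.of_mul_eq_one_right _ hst
  have hs2 : IsUnit (π (s ^ 2)) := by rw [map_pow]; exact hs.pow 2
  rw [h4 s t a (unimod _ hs2) (unimod t ht) (unimod _ (by rw [map_mul]; exact hs2.mul ht))]
  exact h1.apply_cons_eq_of_mk_eq (unimod s hs)
    (by rw [map_mul, map_pow, sq, mul_assoc, hst, mul_one])

theorem MS3.apply_cons_mul_apply_cons_of_mk_eq_mul (h3 : MS3 φ) (h1 : MS1 φ) (h4 : MS4 φ)
    {x y q : R} (hxy : x + y = 1)
    (hx : IsUnit (Ideal.Quotient.mk (Ideal.span (Set.range a)) x))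
    (hy : IsUnit (Ideal.Quotient.mk (Ideal.span (Set.range a)) y))
    (hyq : Ideal.Quotient.mk (Ideal.span (Set.range a)) y =
      Ideal.Quotient.mk (Ideal.span (Set.range a)) x * Ideal.Quotient.mk _ q) :
    φ (Fin.cons x a) * φ (Fin.cons y a) = φ (Fin.cons (x ^ 2) a) * φ (Fin.cons q a) := by
  set π := Ideal.Quotient.mk (Ideal.span (Set.range a))
  have unimod : ∀ z, IsUnit (π z) → IsUnimodular (Fin.cons z a) :=
    fun z => isUnimodular_cons_iff_isUnit_mk.2
  have hq : IsUnit (π q) := isUnit_of_mul_isUnit_right (hyq ▸ hy)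
  have hx2 : IsUnit (π (x ^ 2)) := by rw [map_pow]; exact hx.pow 2
  have hx2q : IsUnit (π (x ^ 2 * q)) := by rw [map_mul]; exact hx2.mul hq
  rw [h3 x y a hxy (unimod x hx) (unimod y hy) (unimod _ (by rw [map_mul]; exact hx.mul hy)),
    h4 x q a (unimod _ hx2) (unimod q hq) (unimod _ hx2q)]
  exact h1.apply_cons_eq_of_mk_eq (unimod _ hx2q)
    (by rw [map_mul, map_mul, map_pow, hyq]; ring)

end MennickeSymbolCalculus

theorem ms3_implies_ms5_general {R : Type*} [CommRing R] {G : Type*} [CommGroup G]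
    (k : ℕ) (φ : (Fin (k + 1) → R) → G)
    (h1 : MS1 φ) (h4 : MS4 φ) (h3 : MS3 φ) : MS5 φ := by
  intro r q a hmem hr _ _
  rw [isUnimodular_cons_iff_isUnit_mk] at hr
  set π := Ideal.Quotient.mk (Ideal.span (Set.range a))
  have hrq : π r * π (1 + q) = π q := by rw [← map_mul]; exact Ideal.Quotient.eq.2 hmem
  have hs : π (1 - r) * π (1 + q) = 1 := by
    rw [map_sub, map_one, sub_mul, one_mul, hrq, map_add, map_one, add_sub_cancel_right]
  have hr_eq : π r = π (1 - r) * π q := by linear_combination (-π r) * hs + π (1 - r) * hrq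
  have hA := h4.apply_cons_sq_mul_apply_cons_of_mk_mul_eq_one h1 hs
  have hB := h3.apply_cons_mul_apply_cons_of_mk_eq_mul h1 h4 (sub_add_cancel 1 r)
    (IsUnit.of_mul_eq_one _ hs) hr hr_eq
  refine mul_left_cancel (a := φ (Fin.cons ((1 - r) ^ 2) a)) ?_
  calc φ (Fin.cons ((1 - r) ^ 2) a) * (φ (Fin.cons r a) * φ (Fin.cons (1 + q) a))
      = φ (Fin.cons ((1 - r) ^ 2) a) * φ (Fin.cons (1 + q) a) * φ (Fin.cons r a) := by
        rw [mul_assoc, mul_comm (φ (Fin.cons r a))]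
    _ = φ (Fin.cons (1 - r) a) * φ (Fin.cons r a) := by rw [hA]
    _ = φ (Fin.cons ((1 - r) ^ 2) a) * φ (Fin.cons q a) := hB

/-- Under `MS1` and `MS4`, relation `MS3` implies relation `MS5`
(van der Kallen, Lemma 3.1, direction ⇒). -/
theorem ms3_implies_ms5 {R : Type*} [CommRing R] {G : Type*} [CommGroup G]
    (k : ℕ) (hk : 1 ≤ k) (φ : (Fin (k + 1) → R) → G)
    (h1 : MS1 φ) (h4 : MS4 φ) (h3 : MS3 φ) : MS5 φ :=
  ms3_implies_ms5_general k φ h1 h4 h3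
end

section
/- (Mennicke–Newman lemma) Let R be a commutative ring with n ≥ 2 for which the stable range condition sr_{2n−2}(R) holds (equivalently, sdim(R) ≤ 2n−3). Let v, w ∈ Um_n(R). Then there exist ε, δ ∈ E_n(R) and elements x, y, a₂,…,aₙ ∈ R such that vε = (x, a₂,…,aₙ), wδ = (y, a₂,…,aₙ), and x + y = 1. -/
/-!
Write `v = (v₀, v')` and `w = (w₀, w')`. The row `(v', w', v₀w₀)` of length `2n - 1` is
unimodular, so `sr_{2n-2}` makes `(v' + v₀w₀ s, w' + v₀w₀ t)` unimodular for some `s, t`; adding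
multiples of the first coordinate to the others we may thus assume `v' ⬝ d + w' ⬝ e = 1`.
With `r = 1 - v₀ - w₀`, adding `r (v' ⬝ d)` and `r (w' ⬝ e)` to the first coordinates gives
heads `x, y` with `x + y = 1`; finally adding `x (w' - v')` to `v'` and `y (v' - w')` to `w'`
makes both tails equal to `v' + x (w' - v')`, because `y = 1 - x`.
-/

open Matrix

theorem Matrix.vecMul_one_add_vecMulVec {R ι : Type*} [CommRing R] [Fintype ι] [DecidableEq ι]
    (v u c : ι → R) : v ᵥ* (1 + vecMulVec u c) = v + (v ⬝ᵥ u) • c := by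
  rw [vecMul_add, vecMul_one, vecMul_vecMulVec]

theorem Matrix.transpose_transvection {R ι : Type*} [CommRing R] [DecidableEq ι] (i j : ι)
    (c : R) : (transvection i j c)ᵀ = transvection j i c := by
  simp [transvection, transpose_add]

section Elementary

variable {R : Type*} [CommRing R] {n : ℕ}

lemma IsElementary.one : IsElementary (1 : Matrix (Fin n) (Fin n) R) :=
  Submonoid.one_mem _

lemma IsElementary.mul {ε δ : Matrix (Fin n) (Fin n) R} (hε : IsElementary ε)
    (hδ : IsElementary δ) : IsElementary (ε * δ) :=
  Submonoid.mul_mem _ hε hδ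

lemma isElementary_transvection {i j : Fin n} (hij : i ≠ j) (c : R) :
    IsElementary (transvection i j c) :=
  Submonoid.subset_closure ⟨i, j, c, hij, rfl⟩

lemma IsElementary.transpose {ε : Matrix (Fin n) (Fin n) R} (hε : IsElementary ε) :
    IsElementary εᵀ := by
  induction hε using Submonoid.closure_induction with
  | mem M hM =>
    obtain ⟨i, j, c, hij, rfl⟩ := hM
    rw [transpose_transvection]
    exact isElementary_transvection hij.symm c
  | one => simpa using IsElementary.one
  | mul A B _ _ hA hB => rw [transpose_mul]; exact hB.mul hA

-- `1 + e_i ⊗ c = ∏_{j ≠ i} e_{ij}(c j)`: the factors commute, as `E_{ij} E_{ij'} = 0` for `j ≠ i`.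
lemma isElementary_one_add_vecMulVec_single {i : Fin n} {c : Fin n → R} (hc : c i = 0) :
    IsElementary (1 + vecMulVec (Pi.single i 1) c) := by
  let P : (Fin n → R) → Prop := fun f => f i = 0 ∧ IsElementary (1 + vecMulVec (Pi.single i 1) f)
  suffices P c from this.2
  rw [← Finset.univ_sum_single c, ← Finset.sum_erase Finset.univ (a := i) (by simp [hc])]
  refine Finset.sum_induction _ P (fun f g hf hg => ⟨?_, ?_⟩)
    ⟨rfl, by simpa using IsElementary.one⟩ (fun j hj => ⟨?_, ?_⟩)
  · simp [hf.1, hg.1]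
  · have hmul : (1 + vecMulVec (Pi.single i 1) f) * (1 + vecMulVec (Pi.single i 1) g)
        = 1 + vecMulVec (Pi.single i 1) (f + g) := by
      simp [mul_add, add_mul, vecMulVec_mul_vecMulVec, hf.1, vecMulVec_add, add_assoc]
    exact hmul ▸ hf.2.mul hg.2
  · simp [(Finset.ne_of_mem_erase hj).symm]
  · have hsingle : vecMulVec (Pi.single i 1) (Pi.single j (c j)) = single i j (c j) := by
      ext a b
      rcases eq_or_ne a i with rfl | ha <;> rcases eq_or_ne b j with rfl | hb <;>
        simp [vecMulVec_apply, *, Ne.symm]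
    exact hsingle ▸ isElementary_transvection (Finset.ne_of_mem_erase hj).symm (c j)

lemma exists_isElementary_vecMul_eq_cons_add_smul (t : Fin n → R) :
    ∃ ε : Matrix (Fin (n + 1)) (Fin (n + 1)) R, IsElementary ε ∧
      ∀ v : Fin (n + 1) → R, v ᵥ* ε = Fin.cons (v 0) (Fin.tail v + v 0 • t) := by
  refine ⟨_, isElementary_one_add_vecMulVec_single (i := 0) (c := Fin.cons 0 t) rfl, fun v => ?_⟩
  rw [vecMul_one_add_vecMulVec, dotProduct_single_one]
  ext j
  refine Fin.cases ?_ (fun j => ?_) j <;> simp [Fin.tail]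

lemma exists_isElementary_vecMul_eq_cons_add_dotProduct (t : Fin n → R) :
    ∃ ε : Matrix (Fin (n + 1)) (Fin (n + 1)) R, IsElementary ε ∧
      ∀ v : Fin (n + 1) → R, v ᵥ* ε = Fin.cons (v 0 + Fin.tail v ⬝ᵥ t) (Fin.tail v) := by
  refine ⟨_, (isElementary_one_add_vecMulVec_single (i := 0) (c := Fin.cons 0 t) rfl).transpose,
    fun v => ?_⟩
  have hdot : v ⬝ᵥ Fin.cons 0 t = Fin.tail v ⬝ᵥ t := by
    rw [← vecCons, dotProduct_cons, mul_zero, zero_add]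
    rfl
  rw [transpose_add, transpose_one, transpose_vecMulVec, vecMul_one_add_vecMulVec, hdot]
  ext j
  refine Fin.cases ?_ (fun j => ?_) j <;> simp [Fin.tail]

end Elementary

section Unimodular

variable {R : Type*} [CommRing R] {k : ℕ}

lemma isUnimodular_append_iff {a b : Fin k → R} :
    IsUnimodular (Fin.append a b) ↔ ∃ d e : Fin k → R, a ⬝ᵥ d + b ⬝ᵥ e = 1 := by
  constructor
  · rintro ⟨u, hu⟩
    refine ⟨fun j => u (Fin.castAdd k j), fun j => u (Fin.natAdd k j), ?_⟩
    simp only [Fin.sum_univ_add, Fin.append_left, Fin.append_right] at hu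
    exact hu
  · rintro ⟨d, e, h⟩
    refine ⟨Fin.append d e, ?_⟩
    simp only [Fin.sum_univ_add, Fin.append_left, Fin.append_right]
    exact h

lemma IsUnimodular.snoc_append_tail_mul_head {v w : Fin (k + 1) → R} (hv : IsUnimodular v)
    (hw : IsUnimodular w) :
    IsUnimodular (Fin.snoc (Fin.append (Fin.tail v) (Fin.tail w)) (v 0 * w 0) :
      Fin (k + k + 1) → R) := by
  obtain ⟨p, hp⟩ := hv
  obtain ⟨q, hq⟩ := hw
  rw [Fin.sum_univ_succ] at hp hq
  refine ⟨Fin.snoc (Fin.append (Fin.tail p) ((v 0 * p 0) • Fin.tail q)) (p 0 * q 0), ?_⟩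
  simp only [Fin.sum_univ_castSucc, Fin.snoc_castSucc, Fin.snoc_last, Fin.sum_univ_add,
    Fin.append_left, Fin.append_right, Fin.tail, Pi.smul_apply, smul_eq_mul]
  have hmul : ∑ j : Fin k, w j.succ * (v 0 * p 0 * q j.succ)
      = v 0 * p 0 * ∑ j : Fin k, w j.succ * q j.succ := by
    rw [Finset.mul_sum]
    exact Finset.sum_congr rfl fun j _ => by ring
  linear_combination hp + v 0 * p 0 * hq + hmul

lemma SRCond.exists_isUnimodular_append (hsr : SRCond R (k + k)) {v w : Fin (k + 1) → R}
    (hv : IsUnimodular v) (hw : IsUnimodular w) :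
    ∃ s t : Fin k → R,
      IsUnimodular (Fin.append (Fin.tail v + (v 0 * w 0) • s) (Fin.tail w + (v 0 * w 0) • t)) := by
  obtain ⟨c, hc⟩ := hsr _ (hv.snoc_append_tail_mul_head hw)
  refine ⟨fun j => c (Fin.castAdd k j), fun j => c (Fin.natAdd k j), ?_⟩
  convert hc using 2 with i
  refine Fin.addCases (fun j => ?_) (fun j => ?_) i <;>
    simp only [Fin.snoc_castSucc, Fin.snoc_last, Fin.append_left, Fin.append_right, Pi.add_apply,
      Pi.smul_apply, smul_eq_mul, mul_comm]

lemma SRCond.exists_isElementary_isUnimodular_append_tail (hsr : SRCond R (k + k))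
    {v w : Fin (k + 1) → R} (hv : IsUnimodular v) (hw : IsUnimodular w) :
    ∃ ε δ : Matrix (Fin (k + 1)) (Fin (k + 1)) R, IsElementary ε ∧ IsElementary δ ∧
      IsUnimodular (Fin.append (Fin.tail (v ᵥ* ε)) (Fin.tail (w ᵥ* δ))) := by
  obtain ⟨s, t, hst⟩ := hsr.exists_isUnimodular_append hv hw
  obtain ⟨ε, hε, hεv⟩ := exists_isElementary_vecMul_eq_cons_add_smul (w 0 • s)
  obtain ⟨δ, hδ, hδw⟩ := exists_isElementary_vecMul_eq_cons_add_smul (v 0 • t)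
  refine ⟨ε, δ, hε, hδ, ?_⟩
  rwa [hεv, hδw, Fin.tail_cons, Fin.tail_cons, smul_smul, smul_smul, mul_comm (w 0)]

lemma exists_isElementary_vecMul_eq_cons_of_isUnimodular_append_tail {v w : Fin (k + 1) → R}
    (h : IsUnimodular (Fin.append (Fin.tail v) (Fin.tail w))) :
    ∃ (ε δ : Matrix (Fin (k + 1)) (Fin (k + 1)) R) (x y : R) (a : Fin k → R),
      IsElementary ε ∧ IsElementary δ ∧ v ᵥ* ε = Fin.cons x a ∧ w ᵥ* δ = Fin.cons y a ∧
        x + y = 1 := by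
  obtain ⟨d, e, hde⟩ := isUnimodular_append_iff.mp h
  set r := 1 - v 0 - w 0
  obtain ⟨ε₁, hε₁, hε₁v⟩ := exists_isElementary_vecMul_eq_cons_add_dotProduct (r • d)
  obtain ⟨δ₁, hδ₁, hδ₁w⟩ := exists_isElementary_vecMul_eq_cons_add_dotProduct (r • e)
  set x := v 0 + Fin.tail v ⬝ᵥ (r • d)
  set y := w 0 + Fin.tail w ⬝ᵥ (r • e)
  have hxy : x + y = 1 := by
    simp only [x, y, r, dotProduct_smul, smul_eq_mul]
    linear_combination (1 - v 0 - w 0) * hde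
  obtain ⟨ε₂, hε₂, hε₂v⟩ := exists_isElementary_vecMul_eq_cons_add_smul (Fin.tail w - Fin.tail v)
  obtain ⟨δ₂, hδ₂, hδ₂w⟩ := exists_isElementary_vecMul_eq_cons_add_smul (Fin.tail v - Fin.tail w)
  refine ⟨ε₁ * ε₂, δ₁ * δ₂, x, y, Fin.tail v + x • (Fin.tail w - Fin.tail v), hε₁.mul hε₂,
    hδ₁.mul hδ₂, ?_, ?_, hxy⟩
  · rw [← vecMul_vecMul, hε₁v, hε₂v, Fin.cons_zero, Fin.tail_cons]
  · rw [← vecMul_vecMul, hδ₁w, hδ₂w, Fin.cons_zero, Fin.tail_cons]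
    congr 1
    rw [show w 0 + Fin.tail w ⬝ᵥ r • e = 1 - x from eq_sub_of_add_eq' hxy]
    module

end Unimodular

theorem mennicke_newman_general {R : Type*} [CommRing R]
    (k : ℕ) (hsr : SRCond R (2 * (k + 1) - 2))
    (v w : Fin (k + 1) → R) (hv : IsUnimodular v) (hw : IsUnimodular w) :
    ∃ (ε δ : Matrix (Fin (k + 1)) (Fin (k + 1)) R) (x y : R) (a : Fin k → R),
      IsElementary ε ∧ IsElementary δ ∧
      Matrix.vecMul v ε = Fin.cons x a ∧ Matrix.vecMul w δ = Fin.cons y a ∧ x + y = 1 := by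
  have hsr' : SRCond R (k + k) := by rwa [show 2 * (k + 1) - 2 = k + k by omega] at hsr
  obtain ⟨ε₁, δ₁, hε₁, hδ₁, htail⟩ := hsr'.exists_isElementary_isUnimodular_append_tail hv hw
  obtain ⟨ε₂, δ₂, x, y, a, hε₂, hδ₂, hvx, hwy, hxy⟩ :=
    exists_isElementary_vecMul_eq_cons_of_isUnimodular_append_tail htail
  refine ⟨ε₁ * ε₂, δ₁ * δ₂, x, y, a, hε₁.mul hε₂, hδ₁.mul hδ₂, ?_, ?_, hxy⟩
  · rw [← vecMul_vecMul, hvx]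
  · rw [← vecMul_vecMul, hwy]

/-- **Mennicke–Newman lemma** (van der Kallen, Lemma 3.2).  Let `R` be a commutative ring,
`n = k + 1 ≥ 2`, satisfying the stable range condition `sr_{2n−2}(R)` (equivalently
`sdim R ≤ 2n − 3`).  For `v, w ∈ Um_n(R)` there are `ε, δ ∈ E_n(R)` with
`vε = (x, a₂,…,aₙ)`, `wδ = (y, a₂,…,aₙ)` and `x + y = 1`. -/
theorem mennicke_newman {R : Type*} [CommRing R]
    (k : ℕ) (hk : 1 ≤ k) (hsr : SRCond R (2 * (k + 1) - 2))
    (v w : Fin (k + 1) → R) (hv : IsUnimodular v) (hw : IsUnimodular w) :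
    ∃ (ε δ : Matrix (Fin (k + 1)) (Fin (k + 1)) R) (x y : R) (a : Fin k → R),
      IsElementary ε ∧ IsElementary δ ∧
      Matrix.vecMul v ε = Fin.cons x a ∧ Matrix.vecMul w δ = Fin.cons y a ∧ x + y = 1 :=
  mennicke_newman_general k hsr v w hv hw
end

section
/- Let R be a commutative ring and n ≥ 2. Let v = (v₁, v₂,…,vₙ) and w = (w₁, w₂,…,wₙ) be unimodular rows in Um_n(R) with v₁ + w₁ = 1. Then there exist ε, δ ∈ E_n(R) and elements a₂,…,aₙ ∈ R such that vε = (v₁, a₂,…,aₙ) and wδ = (w₁, a₂,…,aₙ); that is, without changing the first coordinates, v and w can be elementarily transformed so that all their remaining coordinates agree. -/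
/-!
Transvections `e_{1j}(λ)` add `λ v₁` to the `j`-th coordinate and fix `v₁`, so `v` can be moved
to `v + v₁ (w - v)` and `w` to `w - w₁ (w - v)` on the coordinates `2, …, n`. Since
`v₁ + w₁ = 1`, these two tails coincide.
-/

open Matrix

section Elementary

variable {R : Type*} [CommRing R] {n : ℕ}

theorem vecMul_transvection (v : Fin n → R) (i j : Fin n) (c : R) :
    vecMul v (transvection i j c) = v + Pi.single j (v i * c) := by
  rw [transvection, vecMul_add, vecMul_one]
  congr 1
  ext l
  by_cases hjl : j = l <;> simp [vecMul, dotProduct, single_apply, hjl]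

theorem IsElementary.mul_transvection {ε : Matrix (Fin n) (Fin n) R} (hε : IsElementary ε)
    {i j : Fin n} (hij : i ≠ j) (c : R) : IsElementary (ε * transvection i j c) :=
  Submonoid.mul_mem _ hε (Submonoid.subset_closure ⟨i, j, c, hij, rfl⟩)

theorem exists_isElementary_vecMul_eq_add_smul (v c : Fin n → R) (p : Fin n) (hc : c p = 0) :
    ∃ ε : Matrix (Fin n) (Fin n) R, IsElementary ε ∧ vecMul v ε = v + v p • c := by
  have partial_sums : ∀ s : Finset (Fin n), p ∉ s → ∃ ε : Matrix (Fin n) (Fin n) R,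
      IsElementary ε ∧ vecMul v ε = v + v p • ∑ j ∈ s, Pi.single j (c j) := by
    intro s
    induction s using Finset.induction with
    | empty => exact fun _ => ⟨1, Submonoid.one_mem _, by simp⟩
    | @insert a s ha ih =>
      intro hp
      rw [Finset.mem_insert, not_or] at hp
      obtain ⟨ε, hε, hεv⟩ := ih hp.2
      refine ⟨ε * transvection p a (c a), hε.mul_transvection hp.1 _, ?_⟩
      have hεp : vecMul v ε p = v p := by
        simp [hεv, Finset.sum_apply, Pi.single_apply, hp.2]
      rw [← vecMul_vecMul, vecMul_transvection, hεp, hεv, Finset.sum_insert ha, smul_add,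
        ← Pi.single_smul', smul_eq_mul]
      abel
  obtain ⟨ε, hε, hεv⟩ := partial_sums _ (Finset.notMem_erase p Finset.univ)
  refine ⟨ε, hε, ?_⟩
  rw [hεv, Finset.sum_erase _ (by simp [hc]), Finset.univ_sum_single]

end Elementary

theorem equalize_tails_of_first_coords_sum_one_general {R : Type*} [CommRing R]
    (k : ℕ) (v w : Fin (k + 1) → R) (h1 : v 0 + w 0 = 1) :
    ∃ (ε δ : Matrix (Fin (k + 1)) (Fin (k + 1)) R) (a : Fin k → R),
      IsElementary ε ∧ IsElementary δ ∧
      Matrix.vecMul v ε = Fin.cons (v 0) a ∧ Matrix.vecMul w δ = Fin.cons (w 0) a := by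
  set c : Fin (k + 1) → R := Fin.cons 0 (Fin.tail w - Fin.tail v)
  obtain ⟨ε, hε, hεv⟩ := exists_isElementary_vecMul_eq_add_smul v c 0 rfl
  obtain ⟨δ, hδ, hδw⟩ := exists_isElementary_vecMul_eq_add_smul w (-c) 0 (by simp [c])
  refine ⟨ε, δ, fun i => v i.succ + v 0 * (w i.succ - v i.succ), hε, hδ, ?_, ?_⟩
  · rw [hεv]
    ext j
    refine Fin.cases ?_ (fun i => ?_) j <;> simp [c, Fin.tail]
  · rw [hδw]
    ext j
    refine Fin.cases ?_ (fun i => ?_) j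
    · simp [c]
    · simp only [c, Pi.add_apply, Pi.smul_apply, Pi.neg_apply, Fin.cons_succ, Fin.tail,
        Pi.sub_apply, smul_eq_mul]
      linear_combination (v i.succ - w i.succ) * h1

/-- Let `R` be a commutative ring, `n = k + 1 ≥ 2`, and let `v, w ∈ Um_n(R)` with
`v₁ + w₁ = 1`.  Then, without changing the first coordinates, `v` and `w` can be
elementarily transformed so that all their remaining coordinates agree. -/
theorem equalize_tails_of_first_coords_sum_one {R : Type*} [CommRing R]
    (k : ℕ) (hk : 1 ≤ k) (v w : Fin (k + 1) → R)
    (hv : IsUnimodular v) (hw : IsUnimodular w) (h1 : v 0 + w 0 = 1) :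
    ∃ (ε δ : Matrix (Fin (k + 1)) (Fin (k + 1)) R) (a : Fin k → R),
      IsElementary ε ∧ IsElementary δ ∧
      Matrix.vecMul v ε = Fin.cons (v 0) a ∧ Matrix.vecMul w δ = Fin.cons (w 0) a :=
  equalize_tails_of_first_coords_sum_one_general k v w h1
end

section
/- Let R be a commutative ring with sdim(R) = d such that the stable range condition sr_{d+1}(R) holds. Let S, T be unimodular rows of length n over R (i.e. S, T ∈ Um_n(R)). If (g, s₂,…,sₙ) and (−g, t₂,…,tₙ) are unimodular rows of length n over R, then the row (s₃,…,sₙ, t₃,…,tₙ, s₂t₂, g) of length 2n−2 is unimodular. -/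
/-!
A row is unimodular iff its entries generate the unit ideal. Writing `(s)`, `(t)` for the ideals
generated by the rows `s`, `t`, the hypotheses say `(g) + (s) = (g) + (t) = R`, hence
`(g) + (s)(t) = R`. Since `(s)(t) ⊆ (s₀t₀) + (s₁, …, s_k) + (t₁, …, t_k)`, the entries of
the combined row generate `R`.
-/

theorem isUnimodular_iff_span_eq_top {R : Type*} [CommRing R] {n : ℕ} (v : Fin n → R) :
    IsUnimodular v ↔ Ideal.span (Set.range v) = ⊤ := by
  simp only [IsUnimodular, Ideal.eq_top_iff_one, Ideal.mem_span_range_iff_exists_fun, mul_comm]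

theorem Fin.range_append {α : Type*} {m n : ℕ} (a : Fin m → α) (b : Fin n → α) :
    Set.range (Fin.append a b) = Set.range a ∪ Set.range b := by
  ext x
  simp only [Set.mem_range, Set.mem_union]
  constructor
  · rintro ⟨i, rfl⟩
    induction i using Fin.addCases <;> simp
  · rintro (⟨i, rfl⟩ | ⟨i, rfl⟩)
    exacts [⟨Fin.castAdd n i, Fin.append_left a b i⟩, ⟨Fin.natAdd m i, Fin.append_right a b i⟩]

theorem Ideal.span_range_eq_span_head_sup_span_tail {R : Type*} [CommSemiring R] {n : ℕ}
    (v : Fin (n + 1) → R) :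
    Ideal.span (Set.range v) = Ideal.span {v 0} ⊔ Ideal.span (Set.range (Fin.tail v)) := by
  rw [Fin.range_fin_succ, Ideal.span_insert]

theorem Ideal.sup_mul_sup_le {R : Type*} [CommSemiring R] (I J A B : Ideal R) :
    (I ⊔ A) * (J ⊔ B) ≤ I * J ⊔ A ⊔ B := by
  have hA : A ≤ I * J ⊔ A ⊔ B := le_sup_right.trans le_sup_left
  have hB : B ≤ I * J ⊔ A ⊔ B := le_sup_right
  rw [Ideal.sup_mul, Ideal.mul_sup, Ideal.mul_sup]
  exact sup_le (sup_le (le_sup_left.trans le_sup_left) (Ideal.mul_le_right.trans hB))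
    (sup_le (Ideal.mul_le_left.trans hA) (Ideal.mul_le_right.trans hB))

theorem unimodular_combined_row_general {R : Type*} [CommRing R]
    (k : ℕ)
    (g : R) (s t : Fin (k + 1) → R)
    (hgs : IsUnimodular (Fin.cons g s)) (hgt : IsUnimodular (Fin.cons (-g) t)) :
    IsUnimodular (Fin.append (Fin.append (Fin.tail s) (Fin.tail t)) ![s 0 * t 0, g]) := by
  rw [isUnimodular_iff_span_eq_top] at hgs hgt ⊢
  rw [Fin.range_cons, Ideal.span_insert] at hgs hgt
  rw [Ideal.span_singleton_neg] at hgt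
  have hcomb : Ideal.span {g} ⊔ Ideal.span (Set.range s) * Ideal.span (Set.range t) = ⊤ :=
    (Ideal.sup_mul_eq_of_coprime_left hgs).trans hgt
  rw [eq_top_iff, ← hcomb, Fin.range_append, Fin.range_append, Matrix.range_cons,
    Matrix.range_cons, Matrix.range_empty, Set.union_empty]
  simp only [Ideal.span_union]
  rw [Ideal.span_range_eq_span_head_sup_span_tail s,
    Ideal.span_range_eq_span_head_sup_span_tail t]
  calc _ ≤ Ideal.span {g} ⊔ (Ideal.span {s 0} * Ideal.span {t 0} ⊔
          Ideal.span (Set.range (Fin.tail s)) ⊔ Ideal.span (Set.range (Fin.tail t))) :=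
        sup_le_sup_left (Ideal.sup_mul_sup_le _ _ _ _) _
    _ = _ := by rw [Ideal.span_singleton_mul_span_singleton]; ac_rfl

/-- Let `R` be a commutative ring with `sdim R = d` such that the stable range condition
`sr_{d+1}(R)` holds, and let `S, T ∈ Um_n(R)` with `n = k + 2`.  If `(g, s₂,…,sₙ)` and
`(−g, t₂,…,tₙ)` are unimodular rows of length `n`, then the row
`(s₃,…,sₙ, t₃,…,tₙ, s₂t₂, g)` of length `2n − 2` is unimodular. -/
theorem unimodular_combined_row {R : Type*} [CommRing R]
    (d k : ℕ) (hsr : SRCond R (d + 1))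
    (S T : Fin (k + 2) → R) (hS : IsUnimodular S) (hT : IsUnimodular T)
    (g : R) (s t : Fin (k + 1) → R)
    (hgs : IsUnimodular (Fin.cons g s)) (hgt : IsUnimodular (Fin.cons (-g) t)) :
    IsUnimodular (Fin.append (Fin.append (Fin.tail s) (Fin.tail t)) ![s 0 * t 0, g]) :=
  unimodular_combined_row_general k g s t hgs hgt
end

section
/- (Mennicke–Newman lemma for 2×n right invertible matrices) Let R be a commutative noetherian ring with sdim(R) = d ≤ 2(n−2)−1 and n > 2. Let S, T ∈ Um_{2,n}(R) be right invertible 2×n matrices. Then there exist ε₁, ε₂ ∈ E_n(R) such that Sε₁ = (X, α) and Tε₂ = (I₂ − X, α) for some X ∈ M_{2×2}(R) and α ∈ M_{2×(n−2)}(R), where (X, α) denotes the 2×n matrix whose first two columns form X and whose last n−2 columns form α. -/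
/-- The `m × (p + q)` matrix `(X, α)` whose first `p` columns form `X` and whose last `q`
columns form `α`. -/
def appendCols {R : Type*} [CommRing R] {m p q : ℕ}
    (X : Matrix (Fin m) (Fin p) R) (α : Matrix (Fin m) (Fin q) R) :
    Matrix (Fin m) (Fin (p + q)) R :=
  Matrix.of fun i => Fin.append (X i) (α i)

namespace MN

variable {R : Type*} [CommRing R]

/-! ### Stable range basics -/

theorem srcond_succ {m : ℕ} (h : SRCond R m) : SRCond R (m + 1) := by
  intro a ⟨w, hw⟩
  set am : Fin (m + 1 + 1) := (Fin.last m).castSucc with ham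
  set y : R := a am * w am + a (Fin.last (m+1)) * w (Fin.last (m+1)) with hy
  set b : Fin (m + 1) → R := Fin.snoc (fun i : Fin m => a i.castSucc.castSucc) y with hb
  have hbu : IsUnimodular b := by
    refine ⟨Fin.snoc (fun i : Fin m => w i.castSucc.castSucc) 1, ?_⟩
    rw [Fin.sum_univ_castSucc]
    simp only [hb, Fin.snoc_castSucc, Fin.snoc_last]
    have := Fin.sum_univ_castSucc (fun i : Fin (m+1+1) => a i * w i)
    rw [Fin.sum_univ_castSucc (fun i : Fin (m+1) => a i.castSucc * w i.castSucc)] at this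
    rw [hw] at this
    rw [hy, ham]
    linear_combination this.symm
  obtain ⟨c, f, hf⟩ := h b hbu
  have hblast : b (Fin.last m) = y := by simp [hb]
  have hbcs : ∀ i : Fin m, b i.castSucc = a i.castSucc.castSucc := by
    intro i; simp [hb]
  simp only [hbcs, hblast] at hf
  refine ⟨Fin.snoc (fun i : Fin m => c i * w (Fin.last (m+1))) 0,
    Fin.snoc f (∑ i : Fin m, f i * (c i * w am)), ?_⟩
  rw [Fin.sum_univ_castSucc]
  simp only [Fin.snoc_castSucc, Fin.snoc_last]
  have step : ∑ x : Fin m,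
        (a x.castSucc.castSucc + c x * w (Fin.last (m + 1)) * a (Fin.last (m + 1))) * f x +
      (a (Fin.last m).castSucc + 0 * a (Fin.last (m + 1))) * ∑ i : Fin m, f i * (c i * w am)
      = ∑ x : Fin m, (a x.castSucc.castSucc + c x * y) * f x := by
    rw [Finset.mul_sum, ← Finset.sum_add_distrib]
    refine Finset.sum_congr rfl fun x _ => ?_
    rw [hy, ham]
    ring
  rw [step]
  exact hf

theorem srcond_ge {d m : ℕ} (h : SRCond R d) (hm : d ≤ m) : SRCond R m := by
  induction m with
  | zero => exact (Nat.le_zero.mp hm) ▸ h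
  | succ m ih =>
    rcases Nat.lt_or_ge d (m+1) with hl | hg
    · exact srcond_succ (ih (Nat.lt_succ_iff.mp hl))
    · exact (Nat.le_antisymm hm hg) ▸ h

/-- Relative stable range: absorb a pivot `g` into the row `b`, modulo `e`. -/
theorem rel_sr {m : ℕ} (hm : SRCond R m) (hm1 : SRCond R (m + 1))
    (b : Fin m → R) (g e : R)
    (hw : ∃ (w : Fin m → R) (wg we : R), (∑ i, b i * w i) + g * wg + e * we = 1) :
    ∃ (c f : Fin m → R) (z : R), (∑ i, (b i + c i * g) * f i) + e * z = 1 := by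
  obtain ⟨w, wg, we, hw⟩ := hw
  set a : Fin (m + 1 + 1) → R := Fin.snoc (Fin.snoc b e) g with hadef
  have hau : IsUnimodular a := by
    refine ⟨Fin.snoc (Fin.snoc w we) wg, ?_⟩
    rw [Fin.sum_univ_castSucc, Fin.sum_univ_castSucc]
    simp only [hadef, Fin.snoc_castSucc, Fin.snoc_last]
    linear_combination hw
  obtain ⟨c₁, f₁, hf₁⟩ := hm1 a hau
  -- the row r1 i = a i.castSucc + c₁ i * g
  have halast : a (Fin.last (m+1)) = g := by simp [hadef]
  have hacs : ∀ i : Fin (m+1), a i.castSucc = (Fin.snoc b e : Fin (m+1) → R) i := by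
    intro i; simp [hadef]
  simp only [halast, hacs] at hf₁
  obtain ⟨c₂, f₂, hf₂⟩ :=
    hm (fun i : Fin (m+1) => (Fin.snoc b e : Fin (m+1) → R) i + c₁ i * g) ⟨f₁, hf₁⟩
  simp only [Fin.snoc_castSucc, Fin.snoc_last] at hf₂
  refine ⟨fun i => c₁ i.castSucc + c₂ i * c₁ (Fin.last m), f₂,
    ∑ i : Fin m, c₂ i * f₂ i, ?_⟩
  have step : (∑ i : Fin m, (b i + (c₁ i.castSucc + c₂ i * c₁ (Fin.last m)) * g) * f₂ i)
      + e * ∑ i : Fin m, c₂ i * f₂ i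
      = ∑ i : Fin m,
          (b i + c₁ i.castSucc * g + c₂ i * (e + c₁ (Fin.last m) * g)) * f₂ i := by
    rw [Finset.mul_sum, ← Finset.sum_add_distrib]
    exact Finset.sum_congr rfl fun i _ => by ring
  rw [step]
  exact hf₂

/-! ### Elementary matrices machinery -/

theorem isElementary_one {n : ℕ} : IsElementary (1 : Matrix (Fin n) (Fin n) R) :=
  Submonoid.one_mem _

theorem IsElementary.mul {n : ℕ} {a b : Matrix (Fin n) (Fin n) R}
    (ha : IsElementary a) (hb : IsElementary b) : IsElementary (a * b) :=
  mul_mem ha hb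

theorem isElementary_transvection {n : ℕ} {i j : Fin n} (hij : i ≠ j) (c : R) :
    IsElementary (Matrix.transvection i j c) :=
  Submonoid.subset_closure ⟨i, j, c, hij, rfl⟩

theorem elem_mul {n : ℕ} {a b : Matrix (Fin n) (Fin n) R}
    (ha : IsElementary a) (hb : IsElementary b) : IsElementary (a * b) :=
  mul_mem ha hb

theorem isElementary_one_add_col {n : ℕ} (j : Fin n) (F : Matrix (Fin n) (Fin n) R)
    (h : ∀ a b, F a b ≠ 0 → b = j ∧ a ≠ j) : IsElementary (1 + F) := by
  suffices H : ∀ s : Finset (Fin n), ∀ F : Matrix (Fin n) (Fin n) R,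
      (∀ a b, F a b ≠ 0 → b = j ∧ a ≠ j ∧ a ∈ s) → IsElementary (1 + F) by
    exact H Finset.univ F fun a b hab => ⟨(h a b hab).1, (h a b hab).2, Finset.mem_univ a⟩
  intro s
  induction s using Finset.induction with
  | empty =>
    intro F hF
    have : F = 0 := by
      ext a b; by_contra hab
      exact absurd (hF a b hab).2.2 (Finset.notMem_empty a)
    simp [this, isElementary_one]
  | @insert a₀ s ha₀ ih =>
    intro F hF
    set F₁ : Matrix (Fin n) (Fin n) R := Matrix.of fun x y => if x = a₀ then 0 else F x y with hF₁
    have hF₁a : ∀ x y, F₁ x y = if x = a₀ then 0 else F x y := fun x y => rfl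
    have hF₁supp : ∀ a b, F₁ a b ≠ 0 → b = j ∧ a ≠ j ∧ a ∈ s := by
      intro a b hab
      rw [hF₁a] at hab
      by_cases hx : a = a₀
      · simp [hx] at hab
      · simp only [hx, if_false] at hab
        obtain ⟨h1, h2, h3⟩ := hF a b hab
        exact ⟨h1, h2, (Finset.mem_insert.mp h3).resolve_left hx⟩
    have hrowj : ∀ y, F j y = 0 := by
      intro y; by_contra hy; exact (hF j y hy).2.1 rfl
    by_cases hj : a₀ = j
    · have : F = F₁ := by
        ext x y
        rw [hF₁a]
        by_cases hx : x = a₀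
        · simp [hx, hj, hrowj]
        · simp [hx]
      rw [this]; exact ih F₁ hF₁supp
    · set c := F a₀ j with hc
      have key : 1 + F = Matrix.transvection a₀ j c * (1 + F₁) := by
        have hsplit : F = Matrix.single a₀ j c + F₁ := by
          ext x y
          rw [Matrix.add_apply, hF₁a]
          by_cases hx : x = a₀
          · subst hx
            by_cases hy : y = j
            · subst hy; rw [Matrix.single_apply_same]; simp [hc]
            · have h0 : F x y = 0 := by
                by_contra hxy; exact hy (hF x y hxy).1
              have h1 : Matrix.single x j c x y = 0 :=
                Matrix.single_apply_of_ne _ _ _ _ _ (by tauto)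
              simp [h0, h1]
          · have h1 : Matrix.single a₀ j c x y = 0 :=
              Matrix.single_apply_of_ne _ _ _ _ _ (by tauto)
            simp [h1, hx]
        have hEF : Matrix.single a₀ j c * F₁ = 0 := by
          ext x y
          rw [Matrix.mul_apply]
          rw [show (0 : Matrix (Fin n) (Fin n) R) x y = 0 from rfl]
          refine Finset.sum_eq_zero fun z _ => ?_
          by_cases hz : z = j
          · subst hz
            have h0 : F₁ z y = 0 := by
              rw [hF₁a]
              by_cases hxz : z = a₀
              · simp [hxz]
              · simp [hxz, hrowj]
            rw [h0, mul_zero]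
          · have h1 : Matrix.single a₀ j c x z = 0 :=
              Matrix.single_apply_of_ne _ _ _ _ _ (by tauto)
            rw [h1, zero_mul]
        rw [Matrix.transvection, add_mul, one_mul, mul_add, mul_one, hEF, add_zero, hsplit]
        abel
      rw [key]
      exact elem_mul (isElementary_transvection hj c) (ih F₁ hF₁supp)

theorem isElementary_one_add {n : ℕ} (P : Fin n → Prop) [DecidablePred P]
    (F : Matrix (Fin n) (Fin n) R)
    (h : ∀ a b, F a b ≠ 0 → ¬ P a ∧ P b) : IsElementary (1 + F) := by
  suffices H : ∀ s : Finset (Fin n), ∀ F : Matrix (Fin n) (Fin n) R,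
      (∀ a b, F a b ≠ 0 → ¬ P a ∧ P b ∧ b ∈ s) → IsElementary (1 + F) by
    exact H Finset.univ F fun a b hab => ⟨(h a b hab).1, (h a b hab).2, Finset.mem_univ b⟩
  intro s
  induction s using Finset.induction with
  | empty =>
    intro F hF
    have : F = 0 := by
      ext a b; by_contra hab
      exact absurd (hF a b hab).2.2 (Finset.notMem_empty b)
    simp [this, isElementary_one]
  | @insert c₀ s hc₀ ih =>
    intro F hF
    set F₁ : Matrix (Fin n) (Fin n) R := Matrix.of fun x y => if y = c₀ then 0 else F x y with hF₁
    set F₂ : Matrix (Fin n) (Fin n) R := Matrix.of fun x y => if y = c₀ then F x y else 0 with hF₂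
    have hF₁a : ∀ x y, F₁ x y = if y = c₀ then 0 else F x y := fun x y => rfl
    have hF₂a : ∀ x y, F₂ x y = if y = c₀ then F x y else 0 := fun x y => rfl
    have hkey : 1 + F = (1 + F₁) * (1 + F₂) := by
      have hprod : F₁ * F₂ = 0 := by
        ext x y
        rw [Matrix.mul_apply, show (0 : Matrix (Fin n) (Fin n) R) x y = 0 from rfl]
        refine Finset.sum_eq_zero fun z _ => ?_
        by_cases hz1 : F₁ x z = 0
        · rw [hz1, zero_mul]
        · have hPz : P z := by
            rw [hF₁a] at hz1
            by_cases hzc : z = c₀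
            · simp [hzc] at hz1
            · simp only [hzc, if_false] at hz1
              exact (hF x z hz1).2.1
          have : F₂ z y = 0 := by
            rw [hF₂a]
            by_cases hyc : y = c₀
            · subst hyc; simp only [if_true]
              by_contra hzy
              exact (hF z y hzy).1 hPz
            · simp [hyc]
          rw [this, mul_zero]
      have hsum : F₁ + F₂ = F := by
        ext x y
        rw [Matrix.add_apply, hF₁a, hF₂a]
        by_cases hyc : y = c₀ <;> simp [hyc]
      rw [add_mul, one_mul, mul_add, mul_one, hprod, add_zero, ← hsum]
      abel
    rw [hkey]
    refine elem_mul (ih F₁ ?_) (isElementary_one_add_col c₀ F₂ ?_)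
    · intro a b hab
      rw [hF₁a] at hab
      by_cases hbc : b = c₀
      · simp [hbc] at hab
      · simp only [hbc, if_false] at hab
        obtain ⟨h1, h2, h3⟩ := hF a b hab
        exact ⟨h1, h2, (Finset.mem_insert.mp h3).resolve_left hbc⟩
    · intro a b hab
      rw [hF₂a] at hab
      by_cases hbc : b = c₀
      · subst hbc
        simp only [if_true] at hab
        refine ⟨rfl, fun hac => (hF a b hab).1 (hac ▸ (hF a b hab).2.1)⟩
      · simp [hbc] at hab

theorem sq_zero {n : ℕ} (P : Fin n → Prop) [DecidablePred P]
    (F : Matrix (Fin n) (Fin n) R)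
    (h : ∀ a b, F a b ≠ 0 → ¬ P a ∧ P b) : F * F = 0 := by
  ext x y
  rw [Matrix.mul_apply, show (0 : Matrix (Fin n) (Fin n) R) x y = 0 from rfl]
  refine Finset.sum_eq_zero fun z _ => ?_
  by_cases hz1 : F x z = 0
  · rw [hz1, zero_mul]
  · have : F z y = 0 := by
      by_contra hzy
      exact (h z y hzy).1 ((h x z hz1).2)
    rw [this, mul_zero]

theorem one_add_inv {n : ℕ} (P : Fin n → Prop) [DecidablePred P]
    (F : Matrix (Fin n) (Fin n) R)
    (h : ∀ a b, F a b ≠ 0 → ¬ P a ∧ P b) : (1 + F) * (1 - F) = 1 := by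
  have h2 := sq_zero P F h
  rw [add_mul, one_mul, mul_sub, mul_one, h2, sub_zero]
  abel

theorem mul_one_add_apply {m n : ℕ} (M : Matrix (Fin m) (Fin n) R)
    (F : Matrix (Fin n) (Fin n) R) (i : Fin m) (b : Fin n) :
    (M * ((1 : Matrix (Fin n) (Fin n) R) + F)) i b = M i b + ∑ c, M i c * F c b := by
  rw [Matrix.mul_add, Matrix.mul_one, Matrix.add_apply, Matrix.mul_apply]

theorem dot_single {n : ℕ} (g : Fin n → R) (x : Fin n) (v : R) :
    ∑ c, g c * (Pi.single x v : Fin n → R) c = g x * v := by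
  rw [Finset.sum_eq_single x]
  · simp
  · intro b _ hb
    simp [Pi.single_apply, hb]
  · intro hx
    exact absurd (Finset.mem_univ x) hx

/-! ### Reachability by elementary column operations -/

def Reaches {n : ℕ} (S S' : Matrix (Fin 2) (Fin n) R) : Prop :=
  ∃ ε : Matrix (Fin n) (Fin n) R, IsElementary ε ∧ (∃ ε' : Matrix (Fin n) (Fin n) R, ε * ε' = 1)
    ∧ S' = S * ε

theorem reaches_refl {n : ℕ} (S : Matrix (Fin 2) (Fin n) R) : Reaches S S :=
  ⟨1, isElementary_one, ⟨1, one_mul 1⟩, (Matrix.mul_one S).symm⟩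

theorem reaches_trans {n : ℕ} {S S' S'' : Matrix (Fin 2) (Fin n) R}
    (h1 : Reaches S S') (h2 : Reaches S' S'') : Reaches S S'' := by
  obtain ⟨ε₁, he₁, ⟨ε₁', hi₁⟩, rfl⟩ := h1
  obtain ⟨ε₂, he₂, ⟨ε₂', hi₂⟩, rfl⟩ := h2
  refine ⟨ε₁ * ε₂, elem_mul he₁ he₂, ⟨ε₂' * ε₁', ?_⟩, Matrix.mul_assoc _ _ _⟩
  rw [Matrix.mul_assoc, ← Matrix.mul_assoc ε₂, hi₂, Matrix.one_mul, hi₁]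

theorem reaches_ri {n : ℕ} {S S' : Matrix (Fin 2) (Fin n) R}
    (h : Reaches S S') (hS : RightInvertible S) : RightInvertible S' := by
  obtain ⟨ε, _, ⟨ε', hi⟩, rfl⟩ := h
  obtain ⟨B, hB⟩ := hS
  exact ⟨ε' * B, by rw [Matrix.mul_assoc, ← Matrix.mul_assoc ε, hi, Matrix.one_mul, hB]⟩

theorem reaches_one_add {n : ℕ} (P : Fin n → Prop) [DecidablePred P]
    (S : Matrix (Fin 2) (Fin n) R) (F : Matrix (Fin n) (Fin n) R)
    (h : ∀ a b, F a b ≠ 0 → ¬ P a ∧ P b) :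
    Reaches S (S * (1 + F)) :=
  ⟨1 + F, isElementary_one_add P F h, ⟨1 - F, one_add_inv P F h⟩, rfl⟩

/-! ### Cauchy–Binet for two rows -/

theorem cb2 {N : ℕ} (S : Matrix (Fin 2) (Fin N) R) (hS : RightInvertible S) :
    ∃ β : Fin N → Fin N → R,
      ∑ i, ∑ j, (S 0 i * S 1 j - S 0 j * S 1 i) * β i j = 1 := by
  obtain ⟨B, hB⟩ := hS
  have he : ∀ a b : Fin 2, ∑ c, S a c * B c b = (1 : Matrix (Fin 2) (Fin 2) R) a b := by
    intro a b
    rw [← Matrix.mul_apply, hB]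
  refine ⟨fun i j => B i 0 * B j 1, ?_⟩
  have expand : ∀ i j : Fin N, (S 0 i * S 1 j - S 0 j * S 1 i) * (B i 0 * B j 1)
      = (S 0 i * B i 0) * (S 1 j * B j 1) - (S 1 i * B i 0) * (S 0 j * B j 1) := by
    intro i j; ring
  calc ∑ i, ∑ j, (S 0 i * S 1 j - S 0 j * S 1 i) * (B i 0 * B j 1)
      = ∑ i, ((∑ j, (S 0 i * B i 0) * (S 1 j * B j 1))
          - ∑ j, (S 1 i * B i 0) * (S 0 j * B j 1)) := by
        refine Finset.sum_congr rfl fun i _ => ?_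
        rw [← Finset.sum_sub_distrib]
        exact Finset.sum_congr rfl fun j _ => expand i j
    _ = (∑ i, S 0 i * B i 0) * (∑ j, S 1 j * B j 1)
          - (∑ i, S 1 i * B i 0) * (∑ j, S 0 j * B j 1) := by
        rw [Finset.sum_sub_distrib, Finset.sum_mul_sum, Finset.sum_mul_sum]
    _ = 1 := by
        rw [he 0 0, he 1 1, he 1 0, he 0 1]
        simp [Matrix.one_apply]

/-! ### Column indices for `2 × (2 + k)` matrices -/

variable {k : ℕ}

def h0 : Fin (2 + k) := Fin.castAdd k 0
def h1 : Fin (2 + k) := Fin.castAdd k 1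
def tl (ℓ : Fin k) : Fin (2 + k) := Fin.natAdd 2 ℓ

theorem h0_val : (h0 : Fin (2+k)).val = 0 := rfl
theorem h1_val : (h1 : Fin (2+k)).val = 1 := rfl
theorem tl_val (ℓ : Fin k) : (tl ℓ : Fin (2+k)).val = 2 + ℓ.val := rfl

theorem h0_ne_h1 : (h0 : Fin (2+k)) ≠ h1 := by
  intro h; exact absurd (congrArg Fin.val h) (by simp [h0_val, h1_val])

theorem h0_ne_tl (ℓ : Fin k) : (h0 : Fin (2+k)) ≠ tl ℓ := by
  intro h; have := congrArg Fin.val h; rw [h0_val, tl_val] at this; omega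

theorem h1_ne_tl (ℓ : Fin k) : (h1 : Fin (2+k)) ≠ tl ℓ := by
  intro h; have := congrArg Fin.val h; rw [h1_val, tl_val] at this; omega

theorem tl_ne_h0 (ℓ : Fin k) : (tl ℓ : Fin (2+k)) ≠ h0 := (h0_ne_tl ℓ).symm
theorem tl_ne_h1 (ℓ : Fin k) : (tl ℓ : Fin (2+k)) ≠ h1 := (h1_ne_tl ℓ).symm

theorem tl_inj {ℓ ℓ' : Fin k} (h : tl ℓ = tl ℓ') : ℓ = ℓ' := by
  have := congrArg Fin.val h; rw [tl_val, tl_val] at this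
  exact Fin.ext (by omega)

theorem colCases (j : Fin (2+k)) : j = h0 ∨ j = h1 ∨ ∃ ℓ, j = tl ℓ := by
  rcases j with ⟨v, hv⟩
  by_cases hv0 : v = 0
  · exact Or.inl (Fin.ext (by simp [h0_val, hv0]))
  by_cases hv1 : v = 1
  · exact Or.inr (Or.inl (Fin.ext (by simp [h1_val, hv1])))
  · exact Or.inr (Or.inr ⟨⟨v - 2, by omega⟩, Fin.ext (by simp [tl_val]; omega)⟩)

theorem sum_cols (f : Fin (2+k) → R) : ∑ c, f c = f h0 + f h1 + ∑ ℓ, f (tl ℓ) := by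
  rw [Fin.sum_univ_add (f := fun i : Fin (2+k) => f i), Fin.sum_univ_two]
  rfl

/-! ### Tail coefficient vectors and the four basic moves -/

def tailCoef (w : Fin k → R) : Fin (2+k) → R := fun b => Fin.addCases (fun _ => 0) w b

theorem tailCoef_h0 (w : Fin k → R) : tailCoef w h0 = 0 := by
  simp [tailCoef, h0, Fin.addCases_left]

theorem tailCoef_h1 (w : Fin k → R) : tailCoef w h1 = 0 := by
  simp [tailCoef, h1, Fin.addCases_left]

theorem tailCoef_tl (w : Fin k → R) (ℓ : Fin k) : tailCoef w (tl ℓ) = w ℓ := by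
  simp [tailCoef, tl, Fin.addCases_right]

theorem tailCoef_ne {w : Fin k → R} {b : Fin (2+k)} (h : tailCoef w b ≠ 0) :
    ∃ ℓ, b = tl ℓ := by
  rcases colCases b with rfl | rfl | ⟨ℓ, rfl⟩
  · exact absurd (tailCoef_h0 w) h
  · exact absurd (tailCoef_h1 w) h
  · exact ⟨ℓ, rfl⟩

/-- Move: for each `ℓ`, add `w0 ℓ · col h0 + w1 ℓ · col h1` to column `tl ℓ`. -/
theorem move_tails_from_heads (S : Matrix (Fin 2) (Fin (2+k)) R) (w0 w1 : Fin k → R) :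
    ∃ S', Reaches S S' ∧ (∀ i, S' i h0 = S i h0) ∧ (∀ i, S' i h1 = S i h1) ∧
      (∀ i ℓ, S' i (tl ℓ) = S i (tl ℓ) + S i h0 * w0 ℓ + S i h1 * w1 ℓ) := by
  set F : Matrix (Fin (2+k)) (Fin (2+k)) R :=
    Matrix.of fun c b => if c = h0 then tailCoef w0 b else if c = h1 then tailCoef w1 b else 0
    with hF
  have hFa : ∀ c b, F c b = if c = h0 then tailCoef w0 b else if c = h1 then tailCoef w1 b else 0 :=
    fun c b => rfl
  have hsupp : ∀ a b, F a b ≠ 0 → ¬ (2 ≤ a.val) ∧ (2 ≤ b.val) := by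
    intro a b hab
    rw [hFa] at hab
    by_cases ha0 : a = h0
    · subst ha0
      simp only [if_true] at hab
      obtain ⟨ℓ, rfl⟩ := tailCoef_ne hab
      exact ⟨by simp [h0_val], by simp [tl_val]⟩
    by_cases ha1 : a = h1
    · subst ha1
      simp only [ha0, if_false, if_true] at hab
      obtain ⟨ℓ, rfl⟩ := tailCoef_ne hab
      exact ⟨by simp [h1_val], by simp [tl_val]⟩
    · simp [ha0, ha1] at hab
  have hz : ∀ (i : Fin 2) (b : Fin (2+k)), ∀ x : Fin k, S i (tl x) * F (tl x) b = 0 := by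
    intro i b x
    rw [hFa]
    simp [(h0_ne_tl x).symm, (h1_ne_tl x).symm]
  refine ⟨S * (1 + F), reaches_one_add (fun j => 2 ≤ j.val) S F hsupp, ?_, ?_, ?_⟩
  · intro i
    rw [mul_one_add_apply, sum_cols (fun c => S i c * F c h0),
      Finset.sum_congr rfl fun x _ => hz i h0 x, hFa, hFa]
    simp [h0_ne_h1.symm, tailCoef_h0]
  · intro i
    rw [mul_one_add_apply, sum_cols (fun c => S i c * F c h1),
      Finset.sum_congr rfl fun x _ => hz i h1 x, hFa, hFa]
    simp [h0_ne_h1.symm, tailCoef_h1]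
  · intro i ℓ
    rw [mul_one_add_apply, sum_cols (fun c => S i c * F c (tl ℓ)),
      Finset.sum_congr rfl fun x _ => hz i (tl ℓ) x, hFa, hFa]
    simp [h0_ne_h1.symm, tailCoef_tl]
    ring

/-- Move: add `∑ ℓ, v0 ℓ · col (tl ℓ)` to col `h0` and `∑ ℓ, v1 ℓ · col (tl ℓ)` to col `h1`. -/
theorem move_heads_from_tails (S : Matrix (Fin 2) (Fin (2+k)) R) (v0 v1 : Fin k → R) :
    ∃ S', Reaches S S' ∧ (∀ i, S' i h0 = S i h0 + ∑ ℓ, S i (tl ℓ) * v0 ℓ) ∧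
      (∀ i, S' i h1 = S i h1 + ∑ ℓ, S i (tl ℓ) * v1 ℓ) ∧
      (∀ i ℓ, S' i (tl ℓ) = S i (tl ℓ)) := by
  set F : Matrix (Fin (2+k)) (Fin (2+k)) R :=
    Matrix.of fun c b => if b = h0 then tailCoef v0 c else if b = h1 then tailCoef v1 c else 0
    with hF
  have hFa : ∀ c b, F c b = if b = h0 then tailCoef v0 c else if b = h1 then tailCoef v1 c else 0 :=
    fun c b => rfl
  have hsupp : ∀ a b, F a b ≠ 0 → ¬ (a.val < 2) ∧ (b.val < 2) := by
    intro a b hab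
    rw [hFa] at hab
    by_cases hb0 : b = h0
    · subst hb0
      simp only [if_true] at hab
      obtain ⟨ℓ, rfl⟩ := tailCoef_ne hab
      exact ⟨by simp [tl_val]; omega, by simp [h0_val]⟩
    by_cases hb1 : b = h1
    · subst hb1
      simp only [hb0, if_false, if_true] at hab
      obtain ⟨ℓ, rfl⟩ := tailCoef_ne hab
      exact ⟨by simp [tl_val]; omega, by simp [h1_val]⟩
    · simp [hb0, hb1] at hab
  refine ⟨S * (1 + F), reaches_one_add (fun j => j.val < 2) S F hsupp, ?_, ?_, ?_⟩
  · intro i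
    rw [mul_one_add_apply, sum_cols (fun c => S i c * F c h0), hFa, hFa]
    have : ∀ x : Fin k, S i (tl x) * F (tl x) h0 = S i (tl x) * v0 x := by
      intro x; rw [hFa]; simp [tailCoef_tl]
    rw [Finset.sum_congr rfl fun x _ => this x]
    simp [tailCoef_h0, tailCoef_h1]
  · intro i
    rw [mul_one_add_apply, sum_cols (fun c => S i c * F c h1), hFa, hFa]
    have : ∀ x : Fin k, S i (tl x) * F (tl x) h1 = S i (tl x) * v1 x := by
      intro x; rw [hFa]; simp [h0_ne_h1.symm, tailCoef_tl]
    rw [Finset.sum_congr rfl fun x _ => this x]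
    simp [h0_ne_h1.symm, tailCoef_h0, tailCoef_h1]
  · intro i ℓ
    rw [mul_one_add_apply, sum_cols (fun c => S i c * F c (tl ℓ)), hFa, hFa]
    have : ∀ x : Fin k, S i (tl x) * F (tl x) (tl ℓ) = 0 := by
      intro x; rw [hFa]; simp [tl_ne_h0 ℓ, tl_ne_h1 ℓ]
    rw [Finset.sum_congr rfl fun x _ => this x]
    simp [tl_ne_h0 ℓ, tl_ne_h1 ℓ]

/-- Move: add `w1 · col h1 + ∑ ℓ, wt ℓ · col (tl ℓ)` to column `h0`. -/
theorem move_col0 (S : Matrix (Fin 2) (Fin (2+k)) R) (w1 : R) (wt : Fin k → R) :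
    ∃ S', Reaches S S' ∧
      (∀ i, S' i h0 = S i h0 + S i h1 * w1 + ∑ ℓ, S i (tl ℓ) * wt ℓ) ∧
      (∀ i, S' i h1 = S i h1) ∧ (∀ i ℓ, S' i (tl ℓ) = S i (tl ℓ)) := by
  set F : Matrix (Fin (2+k)) (Fin (2+k)) R :=
    Matrix.of fun c b => if b = h0 then (if c = h1 then w1 else tailCoef wt c) else 0
    with hF
  have hFa : ∀ c b, F c b = if b = h0 then (if c = h1 then w1 else tailCoef wt c) else 0 :=
    fun c b => rfl
  have hsupp : ∀ a b, F a b ≠ 0 → ¬ (a = h0) ∧ (b = h0) := by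
    intro a b hab
    rw [hFa] at hab
    by_cases hb0 : b = h0
    · refine ⟨?_, hb0⟩
      intro ha
      subst ha
      simp only [hb0, if_true, h0_ne_h1, if_false, tailCoef_h0] at hab
      exact hab rfl
    · simp [hb0] at hab
  refine ⟨S * (1 + F), reaches_one_add (fun j => j = h0) S F hsupp, ?_, ?_, ?_⟩
  · intro i
    rw [mul_one_add_apply, sum_cols (fun c => S i c * F c h0), hFa, hFa]
    have : ∀ x : Fin k, S i (tl x) * F (tl x) h0 = S i (tl x) * wt x := by
      intro x; rw [hFa]; simp [(h1_ne_tl x).symm, tailCoef_tl]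
    rw [Finset.sum_congr rfl fun x _ => this x]
    simp [h0_ne_h1, tailCoef_h0]
    ring
  · intro i
    rw [mul_one_add_apply, sum_cols (fun c => S i c * F c h1), hFa, hFa]
    have : ∀ x : Fin k, S i (tl x) * F (tl x) h1 = 0 := by
      intro x; rw [hFa]; simp [h0_ne_h1.symm]
    rw [Finset.sum_congr rfl fun x _ => this x]
    simp [h0_ne_h1.symm]
  · intro i ℓ
    rw [mul_one_add_apply, sum_cols (fun c => S i c * F c (tl ℓ)), hFa, hFa]
    have : ∀ x : Fin k, S i (tl x) * F (tl x) (tl ℓ) = 0 := by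
      intro x; rw [hFa]; simp [tl_ne_h0 ℓ]
    rw [Finset.sum_congr rfl fun x _ => this x]
    simp [tl_ne_h0 ℓ]

/-- Move: add `w0 · col h0` to column `h1`. -/
theorem move_col1 (S : Matrix (Fin 2) (Fin (2+k)) R) (w0 : R) :
    ∃ S', Reaches S S' ∧ (∀ i, S' i h0 = S i h0) ∧
      (∀ i, S' i h1 = S i h1 + S i h0 * w0) ∧ (∀ i ℓ, S' i (tl ℓ) = S i (tl ℓ)) := by
  set F : Matrix (Fin (2+k)) (Fin (2+k)) R :=
    Matrix.of fun c b => if b = h1 ∧ c = h0 then w0 else 0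
    with hF
  have hFa : ∀ c b, F c b = if b = h1 ∧ c = h0 then w0 else 0 := fun c b => rfl
  have hsupp : ∀ a b, F a b ≠ 0 → ¬ (a = h1) ∧ (b = h1) := by
    intro a b hab
    rw [hFa] at hab
    by_cases hc : b = h1 ∧ a = h0
    · exact ⟨hc.2 ▸ h0_ne_h1, hc.1⟩
    · simp [hc] at hab
  refine ⟨S * (1 + F), reaches_one_add (fun j => j = h1) S F hsupp, ?_, ?_, ?_⟩
  · intro i
    rw [mul_one_add_apply, sum_cols (fun c => S i c * F c h0), hFa, hFa]
    have : ∀ x : Fin k, S i (tl x) * F (tl x) h0 = 0 := by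
      intro x; rw [hFa]; simp [h0_ne_h1]
    rw [Finset.sum_congr rfl fun x _ => this x]
    simp [h0_ne_h1]
  · intro i
    rw [mul_one_add_apply, sum_cols (fun c => S i c * F c h1), hFa, hFa]
    have : ∀ x : Fin k, S i (tl x) * F (tl x) h1 = 0 := by
      intro x; rw [hFa]; simp [(h0_ne_tl x).symm]
    rw [Finset.sum_congr rfl fun x _ => this x]
    simp [h0_ne_h1.symm]
  · intro i ℓ
    rw [mul_one_add_apply, sum_cols (fun c => S i c * F c (tl ℓ)), hFa, hFa]
    have : ∀ x : Fin k, S i (tl x) * F (tl x) (tl ℓ) = 0 := by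
      intro x; rw [hFa]; simp [tl_ne_h1 ℓ]
    rw [Finset.sum_congr rfl fun x _ => this x]
    simp [tl_ne_h1 ℓ]

/-! ### Phase 1: normalise the second rows -/

theorem row_unimodular {N : ℕ} (S : Matrix (Fin 2) (Fin N) R) (hS : RightInvertible S)
    (i : Fin 2) : ∃ x : Fin N → R, ∑ c, S i c * x c = 1 := by
  obtain ⟨B, hB⟩ := hS
  refine ⟨fun c => B c i, ?_⟩
  have := congrFun (congrFun hB i) i
  rw [Matrix.mul_apply] at this
  simpa [Matrix.one_apply] using this

theorem phase1 (hsr2k : SRCond R (k + k))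
    (S T : Matrix (Fin 2) (Fin (2+k)) R) (hS : RightInvertible S) (hT : RightInvertible T) :
    ∃ S' T' : Matrix (Fin 2) (Fin (2+k)) R, Reaches S S' ∧ Reaches T T' ∧
      T' 1 h0 = - S' 1 h0 ∧ T' 1 h1 = 1 - S' 1 h1 ∧ ∀ ℓ, T' 1 (tl ℓ) = S' 1 (tl ℓ) := by
  obtain ⟨x, hx⟩ := row_unimodular S hS 1
  obtain ⟨y, hy⟩ := row_unimodular T hT 1
  set gS : R := S 1 h0 * x h0 + S 1 h1 * x h1 with hgSdef
  set gT : R := T 1 h0 * y h0 + T 1 h1 * y h1 with hgTdef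
  have hgS : gS + ∑ ℓ, S 1 (tl ℓ) * x (tl ℓ) = 1 := by
    rw [sum_cols (fun c => S 1 c * x c)] at hx
    rw [hgSdef]; linear_combination hx
  have hgT : gT + ∑ ℓ, T 1 (tl ℓ) * y (tl ℓ) = 1 := by
    rw [sum_cols (fun c => T 1 c * y c)] at hy
    rw [hgTdef]; linear_combination hy
  set g : R := gS * gT with hgdef
  -- the long unimodular row (tails of S, tails of T, g)
  set ρ : Fin (k + k + 1) → R :=
    Fin.snoc (Fin.append (fun ℓ => S 1 (tl ℓ)) (fun ℓ => T 1 (tl ℓ))) g with hρ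
  have hρu : IsUnimodular ρ := by
    refine ⟨Fin.snoc (Fin.append (fun ℓ => x (tl ℓ)) (fun ℓ => gS * y (tl ℓ))) 1, ?_⟩
    rw [Fin.sum_univ_castSucc]
    simp only [hρ, Fin.snoc_castSucc, Fin.snoc_last]
    rw [Fin.sum_univ_add
      (f := fun i : Fin (k+k) => (Fin.append (fun ℓ => S 1 (tl ℓ)) (fun ℓ => T 1 (tl ℓ))) i *
        (Fin.append (fun ℓ => x (tl ℓ)) (fun ℓ => gS * y (tl ℓ))) i)]
    simp only [Fin.append_left, Fin.append_right]
    have hpull : ∑ ℓ : Fin k, T 1 (tl ℓ) * (gS * y (tl ℓ))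
        = gS * ∑ ℓ : Fin k, T 1 (tl ℓ) * y (tl ℓ) := by
      rw [Finset.mul_sum]
      exact Finset.sum_congr rfl fun ℓ _ => by ring
    rw [hpull, hgdef]
    linear_combination hgS + gS * hgT
  obtain ⟨c, f, hf⟩ := hsr2k ρ hρu
  have hρcs : ∀ i : Fin (k+k),
      ρ i.castSucc = (Fin.append (fun ℓ => S 1 (tl ℓ)) (fun ℓ => T 1 (tl ℓ))) i := by
    intro i; simp [hρ]
  have hρlast : ρ (Fin.last (k+k)) = g := by simp [hρ]
  simp only [hρcs, hρlast] at hf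
  -- realise the corrections
  obtain ⟨S₁, hreachS₁, hS₁h0, hS₁h1, hS₁tl⟩ := move_tails_from_heads S
    (fun ℓ => c (Fin.castAdd k ℓ) * gT * x h0) (fun ℓ => c (Fin.castAdd k ℓ) * gT * x h1)
  obtain ⟨T₁, hreachT₁, hT₁h0, hT₁h1, hT₁tl⟩ := move_tails_from_heads T
    (fun ℓ => c (Fin.natAdd k ℓ) * gS * y h0) (fun ℓ => c (Fin.natAdd k ℓ) * gS * y h1)
  have hS₁tail : ∀ ℓ, S₁ 1 (tl ℓ) = S 1 (tl ℓ) + c (Fin.castAdd k ℓ) * g := by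
    intro ℓ; rw [hS₁tl, hgdef, hgSdef]; ring
  have hT₁tail : ∀ ℓ, T₁ 1 (tl ℓ) = T 1 (tl ℓ) + c (Fin.natAdd k ℓ) * g := by
    intro ℓ; rw [hT₁tl, hgdef, hgTdef]; ring
  -- joint tail unimodularity for (S₁, T₁)
  have hJTU : (∑ ℓ, S₁ 1 (tl ℓ) * f (Fin.castAdd k ℓ))
      + (∑ ℓ, T₁ 1 (tl ℓ) * f (Fin.natAdd k ℓ)) = 1 := by
    rw [Fin.sum_univ_add
      (f := fun i : Fin (k+k) => ((Fin.append (fun ℓ => S 1 (tl ℓ)) (fun ℓ => T 1 (tl ℓ))) i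
        + c i * g) * f i)] at hf
    simp only [Fin.append_left, Fin.append_right] at hf
    rw [← hf]
    congr 1
    · exact Finset.sum_congr rfl fun ℓ _ => by rw [hS₁tail]
    · exact Finset.sum_congr rfl fun ℓ _ => by rw [hT₁tail]
  -- Step (ii): fix the head sums to (0, 1)
  set σ0 : R := S₁ 1 h0 + T₁ 1 h0 with hσ0
  set σ1 : R := S₁ 1 h1 + T₁ 1 h1 with hσ1
  obtain ⟨S₂, hreachS₂, hS₂h0, hS₂h1, hS₂tl⟩ := move_heads_from_tails S₁
    (fun ℓ => -σ0 * f (Fin.castAdd k ℓ)) (fun ℓ => (1 - σ1) * f (Fin.castAdd k ℓ))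
  obtain ⟨T₂, hreachT₂, hT₂h0, hT₂h1, hT₂tl⟩ := move_heads_from_tails T₁
    (fun ℓ => -σ0 * f (Fin.natAdd k ℓ)) (fun ℓ => (1 - σ1) * f (Fin.natAdd k ℓ))
  have hsum0 : S₂ 1 h0 + T₂ 1 h0 = 0 := by
    rw [hS₂h0, hT₂h0]
    have e1 : ∑ ℓ, S₁ 1 (tl ℓ) * (-σ0 * f (Fin.castAdd k ℓ))
        = -σ0 * ∑ ℓ, S₁ 1 (tl ℓ) * f (Fin.castAdd k ℓ) := by
      rw [Finset.mul_sum]; exact Finset.sum_congr rfl fun ℓ _ => by ring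
    have e2 : ∑ ℓ, T₁ 1 (tl ℓ) * (-σ0 * f (Fin.natAdd k ℓ))
        = -σ0 * ∑ ℓ, T₁ 1 (tl ℓ) * f (Fin.natAdd k ℓ) := by
      rw [Finset.mul_sum]; exact Finset.sum_congr rfl fun ℓ _ => by ring
    rw [e1, e2]
    linear_combination (-σ0) * hJTU
  have hsum1 : S₂ 1 h1 + T₂ 1 h1 = 1 := by
    rw [hS₂h1, hT₂h1]
    have e1 : ∑ ℓ, S₁ 1 (tl ℓ) * ((1 - σ1) * f (Fin.castAdd k ℓ))
        = (1 - σ1) * ∑ ℓ, S₁ 1 (tl ℓ) * f (Fin.castAdd k ℓ) := by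
      rw [Finset.mul_sum]; exact Finset.sum_congr rfl fun ℓ _ => by ring
    have e2 : ∑ ℓ, T₁ 1 (tl ℓ) * ((1 - σ1) * f (Fin.natAdd k ℓ))
        = (1 - σ1) * ∑ ℓ, T₁ 1 (tl ℓ) * f (Fin.natAdd k ℓ) := by
      rw [Finset.mul_sum]; exact Finset.sum_congr rfl fun ℓ _ => by ring
    rw [e1, e2]
    linear_combination (1 - σ1) * hJTU
  -- Step (iii): equalise the second-row tails
  obtain ⟨S₃, hreachS₃, hS₃h0, hS₃h1, hS₃tl⟩ := move_tails_from_heads S₂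
    (fun _ => 0) (fun ℓ => T₂ 1 (tl ℓ) - S₂ 1 (tl ℓ))
  obtain ⟨T₃, hreachT₃, hT₃h0, hT₃h1, hT₃tl⟩ := move_tails_from_heads T₂
    (fun _ => 0) (fun ℓ => -(T₂ 1 (tl ℓ) - S₂ 1 (tl ℓ)))
  refine ⟨S₃, T₃, reaches_trans hreachS₁ (reaches_trans hreachS₂ hreachS₃),
    reaches_trans hreachT₁ (reaches_trans hreachT₂ hreachT₃), ?_, ?_, ?_⟩
  · rw [hT₃h0, hS₃h0]
    linear_combination hsum0
  · rw [hT₃h1, hS₃h1]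
    linear_combination hsum1
  · intro ℓ
    rw [hT₃tl, hS₃tl]
    linear_combination (-(T₂ 1 (tl ℓ) - S₂ 1 (tl ℓ))) * hsum1

/-! ### Witnessed ideal membership -/

def Wit (AB γ : R) (τS τT : Fin k → R) (r : R) : Prop :=
  ∃ (x y : R) (zS zT : Fin k → R),
    r = x * AB + y * γ + (∑ ℓ, τS ℓ * zS ℓ) + (∑ ℓ, τT ℓ * zT ℓ)

theorem wit_zero {AB γ : R} {τS τT : Fin k → R} : Wit AB γ τS τT 0 :=
  ⟨0, 0, 0, 0, by simp⟩

theorem wit_add {AB γ : R} {τS τT : Fin k → R} {r₁ r₂ : R}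
    (h₁ : Wit AB γ τS τT r₁) (h₂ : Wit AB γ τS τT r₂) : Wit AB γ τS τT (r₁ + r₂) := by
  obtain ⟨x₁, y₁, zS₁, zT₁, e₁⟩ := h₁
  obtain ⟨x₂, y₂, zS₂, zT₂, e₂⟩ := h₂
  refine ⟨x₁ + x₂, y₁ + y₂, fun ℓ => zS₁ ℓ + zS₂ ℓ, fun ℓ => zT₁ ℓ + zT₂ ℓ, ?_⟩
  have eS : ∑ ℓ, τS ℓ * (zS₁ ℓ + zS₂ ℓ) = (∑ ℓ, τS ℓ * zS₁ ℓ) + ∑ ℓ, τS ℓ * zS₂ ℓ := by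
    rw [← Finset.sum_add_distrib]
    exact Finset.sum_congr rfl fun ℓ _ => by ring
  have eT : ∑ ℓ, τT ℓ * (zT₁ ℓ + zT₂ ℓ) = (∑ ℓ, τT ℓ * zT₁ ℓ) + ∑ ℓ, τT ℓ * zT₂ ℓ := by
    rw [← Finset.sum_add_distrib]
    exact Finset.sum_congr rfl fun ℓ _ => by ring
  rw [eS, eT, e₁, e₂]
  ring

theorem wit_smul {AB γ : R} {τS τT : Fin k → R} {r : R} (c : R)
    (h : Wit AB γ τS τT r) : Wit AB γ τS τT (c * r) := by
  obtain ⟨x, y, zS, zT, e⟩ := h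
  refine ⟨c * x, c * y, fun ℓ => c * zS ℓ, fun ℓ => c * zT ℓ, ?_⟩
  have eS : ∑ ℓ, τS ℓ * (c * zS ℓ) = c * ∑ ℓ, τS ℓ * zS ℓ := by
    rw [Finset.mul_sum]
    exact Finset.sum_congr rfl fun ℓ _ => by ring
  have eT : ∑ ℓ, τT ℓ * (c * zT ℓ) = c * ∑ ℓ, τT ℓ * zT ℓ := by
    rw [Finset.mul_sum]
    exact Finset.sum_congr rfl fun ℓ _ => by ring
  rw [eS, eT, e]
  ring

theorem wit_sum {AB γ : R} {τS τT : Fin k → R} {ι : Type*} (s : Finset ι) (F : ι → R)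
    (h : ∀ x ∈ s, Wit AB γ τS τT (F x)) : Wit AB γ τS τT (∑ x ∈ s, F x) :=
  Finset.sum_induction F _ (fun _ _ => wit_add) wit_zero h

theorem wit_mul {A B γ : R} {τS τT : Fin k → R} {mS mT : R}
    (hS : ∃ (x y : R) (z : Fin k → R), mS = x * A + y * γ + ∑ ℓ, τS ℓ * z ℓ)
    (hT : ∃ (x y : R) (z : Fin k → R), mT = x * B + y * γ + ∑ ℓ, τT ℓ * z ℓ) :
    Wit (A * B) γ τS τT (mS * mT) := by
  obtain ⟨xA, y, z, hS⟩ := hS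
  obtain ⟨xB, y', z', hT⟩ := hT
  refine ⟨xA * xB, y * mT + xA * A * y', fun ℓ => z ℓ * mT, fun ℓ => xA * A * z' ℓ, ?_⟩
  have e1 : ∑ ℓ, τS ℓ * (z ℓ * mT) = (∑ ℓ, τS ℓ * z ℓ) * mT := by
    rw [Finset.sum_mul]
    exact Finset.sum_congr rfl fun ℓ _ => by ring
  have e2 : ∑ ℓ, τT ℓ * (xA * A * z' ℓ) = (xA * A) * ∑ ℓ, τT ℓ * z' ℓ := by
    rw [Finset.mul_sum]
    exact Finset.sum_congr rfl fun ℓ _ => by ring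
  rw [e1, e2]
  linear_combination mT * hS + (xA * A) * hT

/-- Generic decomposition of a `2×2` minor of a `2 × (2+k)` matrix. -/
theorem minor_decomp (M : Matrix (Fin 2) (Fin (2+k)) R) (s2 : R) (i j : Fin (2+k)) :
    ∃ (x y : R) (z : Fin k → R),
      M 0 i * M 1 j - M 0 j * M 1 i
        = x * (M 0 h0 - M 1 h0 * s2) + y * (M 0 h1 - M 1 h1 * s2)
          + ∑ ℓ, (s2 * M 1 (tl ℓ) - M 0 (tl ℓ)) * z ℓ := by
  rcases colCases i with rfl | rfl | ⟨m, rfl⟩ <;> rcases colCases j with rfl | rfl | ⟨m', rfl⟩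
  · exact ⟨0, 0, 0, by simp⟩
  · refine ⟨M 1 h1, -(M 1 h0), 0, ?_⟩
    simp only [Pi.zero_apply, mul_zero, Finset.sum_const_zero]
    ring
  · refine ⟨M 1 (tl m'), 0, Pi.single m' (M 1 h0), ?_⟩
    rw [dot_single]
    ring
  · refine ⟨-(M 1 h1), M 1 h0, 0, ?_⟩
    simp only [Pi.zero_apply, mul_zero, Finset.sum_const_zero]
    ring
  · exact ⟨0, 0, 0, by simp⟩
  · refine ⟨0, M 1 (tl m'), Pi.single m' (M 1 h1), ?_⟩
    rw [dot_single]
    ring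
  · refine ⟨-(M 1 (tl m)), 0, Pi.single m (-(M 1 h0)), ?_⟩
    rw [dot_single]
    ring
  · refine ⟨0, -(M 1 (tl m)), Pi.single m (-(M 1 h1)), ?_⟩
    rw [dot_single]
    ring
  · refine ⟨0, 0, (Pi.single m' (M 1 (tl m)) : Fin k → R) + (Pi.single m (-(M 1 (tl m'))) : Fin k → R), ?_⟩
    have e : ∑ ℓ, (s2 * M 1 (tl ℓ) - M 0 (tl ℓ)) *
        ((Pi.single m' (M 1 (tl m)) : Fin k → R) + (Pi.single m (-(M 1 (tl m'))) : Fin k → R)) ℓ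
        = (∑ ℓ, (s2 * M 1 (tl ℓ) - M 0 (tl ℓ)) * (Pi.single m' (M 1 (tl m)) : Fin k → R) ℓ)
          + ∑ ℓ, (s2 * M 1 (tl ℓ) - M 0 (tl ℓ)) * (Pi.single m (-(M 1 (tl m'))) : Fin k → R) ℓ := by
      rw [← Finset.sum_add_distrib]
      exact Finset.sum_congr rfl fun ℓ _ => by simp [mul_add]
    rw [e, dot_single, dot_single]
    ring

set_option maxHeartbeats 1600000 in
/-- Phases 2 and 3: given the second-row pattern, arrange full complementarity. -/
theorem phase23 (hsrk : SRCond R (k + k)) (hsrk1 : SRCond R (k + k + 1))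
    (S T : Matrix (Fin 2) (Fin (2+k)) R) (hS : RightInvertible S) (hT : RightInvertible T)
    (p10 : T 1 h0 = - S 1 h0) (p11 : T 1 h1 = 1 - S 1 h1)
    (ptl : ∀ ℓ, T 1 (tl ℓ) = S 1 (tl ℓ)) :
    ∃ S' T' : Matrix (Fin 2) (Fin (2+k)) R, Reaches S S' ∧ Reaches T T' ∧
      (T' 0 h0 = 1 - S' 0 h0) ∧ (T' 0 h1 = - S' 0 h1) ∧
      (T' 1 h0 = - S' 1 h0) ∧ (T' 1 h1 = 1 - S' 1 h1) ∧
      (∀ ℓ, T' 0 (tl ℓ) = S' 0 (tl ℓ)) ∧ (∀ ℓ, T' 1 (tl ℓ) = S' 1 (tl ℓ)) := by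
  set σ2 : R := S 0 h1 + T 0 h1 with hσ2
  set A : R := S 0 h0 - S 1 h0 * σ2 with hA
  set B : R := T 0 h0 + S 1 h0 * σ2 with hB
  set γ : R := S 0 h1 - S 1 h1 * σ2 with hγ
  set τS : Fin k → R := fun ℓ => σ2 * S 1 (tl ℓ) - S 0 (tl ℓ) with hτS
  set τT : Fin k → R := fun ℓ => σ2 * S 1 (tl ℓ) - T 0 (tl ℓ) with hτT
  have hτSa : ∀ ℓ, τS ℓ = σ2 * S 1 (tl ℓ) - S 0 (tl ℓ) := fun ℓ => rfl
  have hτTa : ∀ ℓ, τT ℓ = σ2 * S 1 (tl ℓ) - T 0 (tl ℓ) := fun ℓ => rfl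
  -- ### P2a : the key witnessed identity
  have hdS : ∀ i j, ∃ (x y : R) (z : Fin k → R),
      S 0 i * S 1 j - S 0 j * S 1 i = x * A + y * γ + ∑ ℓ, τS ℓ * z ℓ := by
    intro i j
    obtain ⟨x, y, z, h⟩ := minor_decomp S σ2 i j
    refine ⟨x, y, z, ?_⟩
    rw [h, ← hA, ← hγ]
  have hdT : ∀ i j, ∃ (x y : R) (z : Fin k → R),
      T 0 i * T 1 j - T 0 j * T 1 i = x * B + y * γ + ∑ ℓ, τT ℓ * z ℓ := by
    intro i j
    obtain ⟨x, y, z, h⟩ := minor_decomp T σ2 i j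
    refine ⟨x, -y, z, ?_⟩
    rw [h, p10, p11]
    have etail : ∀ ℓ, (σ2 * T 1 (tl ℓ) - T 0 (tl ℓ)) * z ℓ = τT ℓ * z ℓ := by
      intro ℓ; rw [ptl ℓ, ← hτTa]
    rw [Finset.sum_congr rfl fun ℓ _ => etail ℓ]
    have e1 : T 0 h0 - -S 1 h0 * σ2 = B := by rw [hB]; ring
    have e2 : T 0 h1 - (1 - S 1 h1) * σ2 = -γ := by rw [hγ, hσ2]; ring
    rw [e1, e2]
    ring
  have hone : Wit (A * B) γ τS τT 1 := by
    obtain ⟨βS, hβS⟩ := cb2 S hS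
    obtain ⟨βT, hβT⟩ := cb2 T hT
    have h1 : (1:R) = (∑ i, ∑ j, (S 0 i * S 1 j - S 0 j * S 1 i) * βS i j)
        * (∑ i, ∑ j, (T 0 i * T 1 j - T 0 j * T 1 i) * βT i j) := by
      rw [hβS, hβT, one_mul]
    rw [h1, Finset.sum_mul]
    refine wit_sum _ _ fun i _ => ?_
    rw [Finset.sum_mul]
    refine wit_sum _ _ fun j _ => ?_
    rw [Finset.mul_sum]
    refine wit_sum _ _ fun i' _ => ?_
    rw [Finset.mul_sum]
    refine wit_sum _ _ fun j' _ => ?_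
    have e : (S 0 i * S 1 j - S 0 j * S 1 i) * βS i j
          * ((T 0 i' * T 1 j' - T 0 j' * T 1 i') * βT i' j')
        = (βS i j * βT i' j')
          * ((S 0 i * S 1 j - S 0 j * S 1 i) * (T 0 i' * T 1 j' - T 0 j' * T 1 i')) := by
      ring
    rw [e]
    exact wit_smul _ (wit_mul (hdS i j) (hdT i' j'))
  -- ### P2b : stable range application
  obtain ⟨X0, Y0, zS, zT, hkey⟩ := hone
  have hbw : (∑ i : Fin (k+k), Fin.append τS τT i * Fin.append zS zT i)
      + (A * B) * X0 + γ * Y0 = 1 := by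
    rw [Fin.sum_univ_add (f := fun i : Fin (k+k) =>
      Fin.append τS τT i * Fin.append zS zT i)]
    simp only [Fin.append_left, Fin.append_right]
    linear_combination -hkey
  obtain ⟨c, f, z, hcf⟩ := rel_sr hsrk hsrk1 (Fin.append τS τT) (A * B) γ
    ⟨Fin.append zS zT, X0, Y0, hbw⟩
  have hcf' : (∑ ℓ, (τS ℓ + c (Fin.castAdd k ℓ) * (A * B)) * f (Fin.castAdd k ℓ))
      + (∑ ℓ, (τT ℓ + c (Fin.natAdd k ℓ) * (A * B)) * f (Fin.natAdd k ℓ)) + γ * z = 1 := by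
    rw [Fin.sum_univ_add (f := fun i : Fin (k+k) =>
      (Fin.append τS τT i + c i * (A * B)) * f i)] at hcf
    simp only [Fin.append_left, Fin.append_right] at hcf
    linear_combination hcf
  -- ### P2c : realise the corrections by column moves
  set t : Fin k → R :=
    fun ℓ => -(c (Fin.castAdd k ℓ) * B + c (Fin.natAdd k ℓ) * A) with htdef
  set sv : Fin k → R := fun ℓ => -(c (Fin.castAdd k ℓ) * B) - t ℓ * S 1 h1 with hsvdef
  have hta : ∀ ℓ, t ℓ = -(c (Fin.castAdd k ℓ) * B + c (Fin.natAdd k ℓ) * A) := fun ℓ => rfl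
  have hsva : ∀ ℓ, sv ℓ = -(c (Fin.castAdd k ℓ) * B) - t ℓ * S 1 h1 := fun ℓ => rfl
  obtain ⟨S₁, rS₁, eS₁h0, eS₁h1, eS₁tl⟩ := move_tails_from_heads S
    (fun ℓ => t ℓ * S 1 h1 + sv ℓ) (fun ℓ => -(t ℓ) * S 1 h0)
  obtain ⟨T₁, rT₁, eT₁h0, eT₁h1, eT₁tl⟩ := move_tails_from_heads T
    (fun ℓ => t ℓ * (1 - S 1 h1) - sv ℓ) (fun ℓ => t ℓ * S 1 h0)
  have p10₁ : T₁ 1 h0 = - S₁ 1 h0 := by rw [eT₁h0, eS₁h0, p10]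
  have p11₁ : T₁ 1 h1 = 1 - S₁ 1 h1 := by rw [eT₁h1, eS₁h1, p11]
  have ptl₁ : ∀ ℓ, T₁ 1 (tl ℓ) = S₁ 1 (tl ℓ) := by
    intro ℓ
    rw [eT₁tl, eS₁tl, ptl ℓ, p10, p11]
    ring
  have hτS₁ : ∀ ℓ, σ2 * S₁ 1 (tl ℓ) - S₁ 0 (tl ℓ)
      = τS ℓ + c (Fin.castAdd k ℓ) * (A * B) + (t ℓ * S 1 h0) * γ := by
    intro ℓ
    rw [eS₁tl, eS₁tl, hτSa ℓ, hsva ℓ, hta ℓ]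
    ring
  have hτT₁ : ∀ ℓ, σ2 * S₁ 1 (tl ℓ) - T₁ 0 (tl ℓ)
      = τT ℓ + c (Fin.natAdd k ℓ) * (A * B) + (t ℓ * S 1 h0) * γ := by
    intro ℓ
    rw [eS₁tl, eT₁tl, hτTa ℓ, hsva ℓ, hta ℓ]
    ring
  have hW : (∑ ℓ, (σ2 * S₁ 1 (tl ℓ) - S₁ 0 (tl ℓ)) * f (Fin.castAdd k ℓ))
      + (∑ ℓ, (σ2 * S₁ 1 (tl ℓ) - T₁ 0 (tl ℓ)) * f (Fin.natAdd k ℓ))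
      + γ * (z - (∑ ℓ, (t ℓ * S 1 h0) * f (Fin.castAdd k ℓ))
             - (∑ ℓ, (t ℓ * S 1 h0) * f (Fin.natAdd k ℓ))) = 1 := by
    have e1 : ∑ ℓ, (σ2 * S₁ 1 (tl ℓ) - S₁ 0 (tl ℓ)) * f (Fin.castAdd k ℓ)
        = (∑ ℓ, (τS ℓ + c (Fin.castAdd k ℓ) * (A * B)) * f (Fin.castAdd k ℓ))
          + ∑ ℓ, ((t ℓ * S 1 h0) * γ) * f (Fin.castAdd k ℓ) := by
      rw [← Finset.sum_add_distrib]
      refine Finset.sum_congr rfl fun ℓ _ => ?_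
      rw [hτS₁ ℓ]; ring
    have e2 : ∑ ℓ, (σ2 * S₁ 1 (tl ℓ) - T₁ 0 (tl ℓ)) * f (Fin.natAdd k ℓ)
        = (∑ ℓ, (τT ℓ + c (Fin.natAdd k ℓ) * (A * B)) * f (Fin.natAdd k ℓ))
          + ∑ ℓ, ((t ℓ * S 1 h0) * γ) * f (Fin.natAdd k ℓ) := by
      rw [← Finset.sum_add_distrib]
      refine Finset.sum_congr rfl fun ℓ _ => ?_
      rw [hτT₁ ℓ]; ring
    have e3 : ∑ ℓ, ((t ℓ * S 1 h0) * γ) * f (Fin.castAdd k ℓ)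
        = γ * ∑ ℓ, (t ℓ * S 1 h0) * f (Fin.castAdd k ℓ) := by
      rw [Finset.mul_sum]
      exact Finset.sum_congr rfl fun ℓ _ => by ring
    have e4 : ∑ ℓ, ((t ℓ * S 1 h0) * γ) * f (Fin.natAdd k ℓ)
        = γ * ∑ ℓ, (t ℓ * S 1 h0) * f (Fin.natAdd k ℓ) := by
      rw [Finset.mul_sum]
      exact Finset.sum_congr rfl fun ℓ _ => by ring
    rw [e1, e2, e3, e4]
    linear_combination hcf'
  -- ### P2d : fix the first head sum to 1
  set zp : R := z - (∑ ℓ, (t ℓ * S 1 h0) * f (Fin.castAdd k ℓ))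
      - (∑ ℓ, (t ℓ * S 1 h0) * f (Fin.natAdd k ℓ)) with hzp
  set σ1 : R := S 0 h0 + T 0 h0 with hσ1
  set t2 : Fin k → R := fun m => -((1 - σ1) * f (Fin.castAdd k m) + (1 - σ1) * f (Fin.natAdd k m))
    with ht2
  set t3 : Fin k → R := fun m => (1 - σ1) * f (Fin.natAdd k m)
      - (1 - S 1 h1) * ((1 - σ1) * f (Fin.castAdd k m) + (1 - σ1) * f (Fin.natAdd k m)) with ht3
  have ht2a : ∀ m, t2 m
      = -((1 - σ1) * f (Fin.castAdd k m) + (1 - σ1) * f (Fin.natAdd k m)) := fun m => rfl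
  have ht3a : ∀ m, t3 m = (1 - σ1) * f (Fin.natAdd k m)
      - (1 - S 1 h1) * ((1 - σ1) * f (Fin.castAdd k m) + (1 - σ1) * f (Fin.natAdd k m)) :=
    fun m => rfl
  obtain ⟨S₂, rS₂, eS₂h0, eS₂h1, eS₂tl⟩ := move_col0 S₁
    (((1 - σ1) * zp) * (1 - S 1 h1) - ∑ m, t2 m * S₁ 1 (tl m))
    (fun m => t2 m * S 1 h1 + t3 m)
  obtain ⟨T₂, rT₂, eT₂h0, eT₂h1, eT₂tl⟩ := move_col0 T₁
    (-(((1 - σ1) * zp) * S 1 h1) - ∑ m, t2 m * S₁ 1 (tl m))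
    (fun m => t2 m * (1 - S 1 h1) - t3 m)
  have fuse : (∑ m, S₁ 0 (tl m) * (t2 m * S 1 h1 + t3 m))
      + (∑ m, T₁ 0 (tl m) * (t2 m * (1 - S 1 h1) - t3 m))
      - (S 0 h1 + T 0 h1) * (∑ m, t2 m * S₁ 1 (tl m))
      - (1 - σ1) * (∑ ℓ, (σ2 * S₁ 1 (tl ℓ) - S₁ 0 (tl ℓ)) * f (Fin.castAdd k ℓ))
      - (1 - σ1) * (∑ ℓ, (σ2 * S₁ 1 (tl ℓ) - T₁ 0 (tl ℓ)) * f (Fin.natAdd k ℓ)) = 0 := by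
    rw [Finset.mul_sum, Finset.mul_sum, Finset.mul_sum, ← Finset.sum_add_distrib,
      ← Finset.sum_sub_distrib, ← Finset.sum_sub_distrib, ← Finset.sum_sub_distrib]
    refine Finset.sum_eq_zero fun m _ => ?_
    rw [ht2a m, ht3a m]
    ring
  have ha : S₂ 0 h0 + T₂ 0 h0 = 1 := by
    rw [eS₂h0 0, eT₂h0 0]
    simp only [eS₁h0, eS₁h1, eT₁h0, eT₁h1]
    linear_combination fuse + (1 - σ1) * hW
  have p10₂ : T₂ 1 h0 = - S₂ 1 h0 := by
    rw [eT₂h0 1, eS₂h0 1]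
    simp only [p10₁, p11₁, ptl₁, eS₁h1, eT₁h1, p11]
    have fuse2 : (∑ m, S₁ 1 (tl m) * (t2 m * S 1 h1 + t3 m))
        + (∑ m, S₁ 1 (tl m) * (t2 m * (1 - S 1 h1) - t3 m))
        - (∑ m, t2 m * S₁ 1 (tl m)) = 0 := by
      rw [← Finset.sum_add_distrib, ← Finset.sum_sub_distrib]
      exact Finset.sum_eq_zero fun m _ => by ring
    linear_combination fuse2
  have p11₂ : T₂ 1 h1 = 1 - S₂ 1 h1 := by rw [eT₂h1 1, eS₂h1 1, p11₁]
  have ptl₂ : ∀ ℓ, T₂ 1 (tl ℓ) = S₂ 1 (tl ℓ) := by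
    intro ℓ; rw [eT₂tl 1 ℓ, eS₂tl 1 ℓ, ptl₁ ℓ]
  have hσ2₂ : S₂ 0 h1 + T₂ 0 h1 = σ2 := by
    rw [eS₂h1 0, eT₂h1 0, eS₁h1 0, eT₁h1 0, hσ2]
  -- ### P2e : kill the second head sum
  obtain ⟨S₃, rS₃, eS₃h0, eS₃h1, eS₃tl⟩ := move_col1 S₂ (-σ2)
  obtain ⟨T₃, rT₃, eT₃h0, eT₃h1, eT₃tl⟩ := move_col1 T₂ (-σ2)
  have hb0 : T₃ 0 h0 = 1 - S₃ 0 h0 := by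
    rw [eT₃h0 0, eS₃h0 0]
    linear_combination ha
  have hb1 : T₃ 0 h1 = - S₃ 0 h1 := by
    rw [eT₃h1 0, eS₃h1 0]
    linear_combination hσ2₂ - σ2 * ha
  have p10₃ : T₃ 1 h0 = - S₃ 1 h0 := by rw [eT₃h0 1, eS₃h0 1, p10₂]
  have p11₃ : T₃ 1 h1 = 1 - S₃ 1 h1 := by
    rw [eT₃h1 1, eS₃h1 1]
    linear_combination p11₂ + (-σ2) * p10₂
  have ptl₃ : ∀ ℓ, T₃ 1 (tl ℓ) = S₃ 1 (tl ℓ) := by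
    intro ℓ; rw [eT₃tl 1 ℓ, eS₃tl 1 ℓ, ptl₂ ℓ]
  -- ### P3 : equalise the first-row tails
  obtain ⟨S₄, rS₄, eS₄h0, eS₄h1, eS₄tl⟩ := move_tails_from_heads S₃
    (fun ℓ => T₃ 0 (tl ℓ) - S₃ 0 (tl ℓ)) (fun _ => 0)
  obtain ⟨T₄, rT₄, eT₄h0, eT₄h1, eT₄tl⟩ := move_tails_from_heads T₃
    (fun ℓ => -(T₃ 0 (tl ℓ) - S₃ 0 (tl ℓ))) (fun _ => 0)
  refine ⟨S₄, T₄,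
    reaches_trans rS₁ (reaches_trans rS₂ (reaches_trans rS₃ rS₄)),
    reaches_trans rT₁ (reaches_trans rT₂ (reaches_trans rT₃ rT₄)), ?_, ?_, ?_, ?_, ?_, ?_⟩
  · rw [eT₄h0 0, eS₄h0 0, hb0]
  · rw [eT₄h1 0, eS₄h1 0, hb1]
  · rw [eT₄h0 1, eS₄h0 1, p10₃]
  · rw [eT₄h1 1, eS₄h1 1, p11₃]
  · intro ℓ
    rw [eT₄tl 0 ℓ, eS₄tl 0 ℓ]
    linear_combination (-(T₃ 0 (tl ℓ) - S₃ 0 (tl ℓ))) * hb0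
  · intro ℓ
    rw [eT₄tl 1 ℓ, eS₄tl 1 ℓ]
    linear_combination ptl₃ ℓ + (-(T₃ 0 (tl ℓ) - S₃ 0 (tl ℓ))) * p10₃

end MN

set_option maxHeartbeats 1600000 in
/-- **Mennicke–Newman lemma for `2 × n` right invertible matrices.**  Let `R` be a
commutative noetherian ring with `sdim R = d ≤ 2(n−2) − 1` (so `sr_{d+1}(R)` holds) and
`n = 2 + k > 2`.  For `S, T ∈ Um_{2,n}(R)` there are `ε₁, ε₂ ∈ E_n(R)` with
`Sε₁ = (X, α)` and `Tε₂ = (I₂ − X, α)` for some `X ∈ M_{2×2}(R)`, `α ∈ M_{2×(n−2)}(R)`. -/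
theorem mennicke_newman_two_rows {R : Type*} [CommRing R] [IsNoetherianRing R]
    (d k : ℕ) (hk : 1 ≤ k) (hsr : SRCond R (d + 1)) (hd : d ≤ 2 * k - 1)
    (S T : Matrix (Fin 2) (Fin (2 + k)) R)
    (hS : RightInvertible S) (hT : RightInvertible T) :
    ∃ (ε₁ ε₂ : Matrix (Fin (2 + k)) (Fin (2 + k)) R)
      (X : Matrix (Fin 2) (Fin 2) R) (α : Matrix (Fin 2) (Fin k) R),
      IsElementary ε₁ ∧ IsElementary ε₂ ∧
      S * ε₁ = appendCols X α ∧ T * ε₂ = appendCols (1 - X) α := by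
  have h2k : SRCond R (k + k) := MN.srcond_ge hsr (by omega)
  have h2k1 : SRCond R (k + k + 1) := MN.srcond_ge hsr (by omega)
  obtain ⟨S₁, T₁, rS₁, rT₁, q10, q11, qtl⟩ := MN.phase1 h2k S T hS hT
  obtain ⟨S', T', rS', rT', e00, e01, e10, e11, et0, et1⟩ :=
    MN.phase23 h2k h2k1 S₁ T₁ (MN.reaches_ri rS₁ hS) (MN.reaches_ri rT₁ hT) q10 q11 qtl
  obtain ⟨ε₁, he₁, _, hSe⟩ := MN.reaches_trans rS₁ rS'
  obtain ⟨ε₂, he₂, _, hTe⟩ := MN.reaches_trans rT₁ rT'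
  refine ⟨ε₁, ε₂, Matrix.of fun i j => S' i (Fin.castAdd k j),
    Matrix.of fun i ℓ => S' i (Fin.natAdd 2 ℓ), he₁, he₂, ?_, ?_⟩
  · rw [← hSe]
    refine Matrix.ext fun i j => ?_
    refine Fin.addCases (fun j' => ?_) (fun ℓ => ?_) j
    · simp only [appendCols, Matrix.of_apply, Fin.append_left]
    · simp only [appendCols, Matrix.of_apply, Fin.append_right]
  · rw [← hTe]
    refine Matrix.ext fun i j => ?_
    refine Fin.addCases (fun j' => ?_) (fun ℓ => ?_) j
    · simp only [appendCols, Matrix.of_apply, Fin.append_left, Matrix.sub_apply]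
      fin_cases i <;> fin_cases j'
      · simpa [Matrix.one_apply, MN.h0, MN.h1] using e00
      · simpa [Matrix.one_apply, MN.h0, MN.h1] using e01
      · simpa [Matrix.one_apply, MN.h0, MN.h1] using e10
      · simpa [Matrix.one_apply, MN.h0, MN.h1] using e11
    · simp only [appendCols, Matrix.of_apply, Fin.append_right]
      fin_cases i
      · exact et0 ℓ
      · exact et1 ℓ
end

section
/- Let R be a commutative ring, m ≥ 2, n > m, and let X ∈ M_{m×m}(R), α₁, α₂ ∈ M_{m×(n−m)}(R). Then the matrices obtained by the column operations α₁ ↦ α₁ + X(α₂ − α₁) and α₂ ↦ α₂ + (I_m − X)(α₁ − α₂) are equal: α₁ + X(α₂ − α₁) = α₂ + (I_m − X)(α₁ − α₂). Consequently, for S = (X, α₁) and T = (I_m − X, α₂) in Um_{m,n}(R), there exist ε₁, ε₂ ∈ E_n(R) and α ∈ M_{m×(n−m)}(R) with Sε₁ = (X, α) and Tε₂ = (I_m − X, α). -/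
/-
Adding `X(α₂ − α₁)` to `α₁` and `(I − X)(α₁ − α₂)` to `α₂` gives the same block, as a ring
computation shows. Both operations are right multiplications by a block transvection
`[[I, B], [0, I]]`, which is a product of elementary matrices `e_{ij}(B i j)` because
`B ↦ [[I, B], [0, I]]` turns sums into products.
-/

theorem Fin.castAdd_ne_natAdd {m k : ℕ} (i : Fin m) (j : Fin k) :
    Fin.castAdd k i ≠ Fin.natAdd m j := by
  simp only [ne_eq, Fin.ext_iff, Fin.val_castAdd, Fin.val_natAdd]
  omega

section BlockTransvection

open Matrix

variable {R : Type*} [CommRing R] {m k : ℕ}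

theorem add_mul_sub_eq_add_one_sub_mul_sub {ι κ : Type*} [Fintype ι] [DecidableEq ι]
    (X : Matrix ι ι R) (α₁ α₂ : Matrix ι κ R) :
    α₁ + X * (α₂ - α₁) = α₂ + (1 - X) * (α₁ - α₂) := by
  simp only [Matrix.mul_sub, Matrix.sub_mul, Matrix.one_mul]
  abel

theorem appendCols_eq_submatrix_fromCols {p q : ℕ}
    (X : Matrix (Fin m) (Fin p) R) (α : Matrix (Fin m) (Fin q) R) :
    appendCols X α = (fromCols X α).submatrix id finSumFinEquiv.symm := by
  ext i j
  refine Fin.addCases (fun a => ?_) (fun b => ?_) j <;> simp [appendCols]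

def blockTransvection (B : Matrix (Fin m) (Fin k) R) : Matrix (Fin (m + k)) (Fin (m + k)) R :=
  (fromBlocks 1 B 0 1).submatrix finSumFinEquiv.symm finSumFinEquiv.symm

theorem blockTransvection_zero : blockTransvection (0 : Matrix (Fin m) (Fin k) R) = 1 := by
  simp [blockTransvection, fromBlocks_one]

theorem blockTransvection_add (B B' : Matrix (Fin m) (Fin k) R) :
    blockTransvection (B + B') = blockTransvection B * blockTransvection B' := by
  simp [blockTransvection, submatrix_mul_equiv, fromBlocks_multiply, add_comm]

theorem blockTransvection_single (i : Fin m) (j : Fin k) (c : R) :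
    blockTransvection (single i j c) = transvection (Fin.castAdd k i) (Fin.natAdd m j) c := by
  ext a b
  refine Fin.addCases (fun a => ?_) (fun a => ?_) a <;>
    refine Fin.addCases (fun b => ?_) (fun b => ?_) b <;>
    simp [blockTransvection, transvection, single_apply, one_apply, Fin.castAdd_ne_natAdd,
      (Fin.castAdd_ne_natAdd _ _).symm]

theorem isElementary_blockTransvection (B : Matrix (Fin m) (Fin k) R) :
    IsElementary (blockTransvection B) := by
  have hzero : IsElementary (blockTransvection (0 : Matrix (Fin m) (Fin k) R)) := by
    rw [blockTransvection_zero]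
    exact Submonoid.one_mem _
  have hadd : ∀ B B' : Matrix (Fin m) (Fin k) R, IsElementary (blockTransvection B) →
      IsElementary (blockTransvection B') → IsElementary (blockTransvection (B + B')) := by
    intro B B' hB hB'
    rw [blockTransvection_add]
    exact Submonoid.mul_mem _ hB hB'
  have hsingle : ∀ i j, IsElementary (blockTransvection (single i j (B i j))) := by
    intro i j
    rw [blockTransvection_single]
    exact Submonoid.subset_closure ⟨_, _, _, Fin.castAdd_ne_natAdd i j, rfl⟩
  rw [matrix_eq_sum_single B]
  exact Finset.sum_induction _ _ hadd hzero fun i _ =>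
    Finset.sum_induction _ _ hadd hzero fun j _ => hsingle i j

theorem appendCols_mul_blockTransvection (X : Matrix (Fin m) (Fin m) R)
    (α B : Matrix (Fin m) (Fin k) R) :
    appendCols X α * blockTransvection B = appendCols X (α + X * B) := by
  simp [appendCols_eq_submatrix_fromCols, blockTransvection, submatrix_mul_equiv,
    fromCols_mul_fromBlocks, add_comm]

end BlockTransvection

theorem column_operations_equalize_general {R : Type*} [CommRing R]
    (m k : ℕ)
    (X : Matrix (Fin m) (Fin m) R) (α₁ α₂ : Matrix (Fin m) (Fin k) R) :
    α₁ + X * (α₂ - α₁) = α₂ + (1 - X) * (α₁ - α₂) ∧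
    ∃ (ε₁ ε₂ : Matrix (Fin (m + k)) (Fin (m + k)) R) (α : Matrix (Fin m) (Fin k) R),
      IsElementary ε₁ ∧ IsElementary ε₂ ∧
      appendCols X α₁ * ε₁ = appendCols X α ∧
      appendCols (1 - X) α₂ * ε₂ = appendCols (1 - X) α := by
  have hsame := add_mul_sub_eq_add_one_sub_mul_sub X α₁ α₂
  refine ⟨hsame, blockTransvection (α₂ - α₁), blockTransvection (α₁ - α₂), α₁ + X * (α₂ - α₁),
    isElementary_blockTransvection _, isElementary_blockTransvection _,
    appendCols_mul_blockTransvection _ _ _, ?_⟩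
  rw [appendCols_mul_blockTransvection, hsame]

/-- The column operations `α₁ ↦ α₁ + X(α₂ − α₁)` and `α₂ ↦ α₂ + (I_m − X)(α₁ − α₂)` produce
equal matrices; consequently, for `S = (X, α₁)` and `T = (I_m − X, α₂)` in `Um_{m,n}(R)`
(`n = m + k`), there are `ε₁, ε₂ ∈ E_n(R)` and `α` with `Sε₁ = (X, α)`,
`Tε₂ = (I_m − X, α)`. -/
theorem column_operations_equalize {R : Type*} [CommRing R]
    (m k : ℕ) (hm : 2 ≤ m) (hk : 1 ≤ k)
    (X : Matrix (Fin m) (Fin m) R) (α₁ α₂ : Matrix (Fin m) (Fin k) R)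
    (hS : RightInvertible (appendCols X α₁))
    (hT : RightInvertible (appendCols (1 - X) α₂)) :
    α₁ + X * (α₂ - α₁) = α₂ + (1 - X) * (α₁ - α₂) ∧
    ∃ (ε₁ ε₂ : Matrix (Fin (m + k)) (Fin (m + k)) R) (α : Matrix (Fin m) (Fin k) R),
      IsElementary ε₁ ∧ IsElementary ε₂ ∧
      appendCols X α₁ * ε₁ = appendCols X α ∧
      appendCols (1 - X) α₂ * ε₂ = appendCols (1 - X) α :=
  column_operations_equalize_general m k X α₁ α₂
end
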